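/- arXiv:1912.10254 — 9 statements merged into one kernel-verified Lean document; each statement's English description precedes it below -/
import Mathlib

section
/- The k-linear map w̃ : 𝔥 → 𝔥 determined by w̃(α∨) = (wα)∨ for α ∈ Φ and w̃(X_{α̃}) = X_{w(α̃)} for α̃ ∈ Φ̃ is a Lie algebra automorphism of 𝔥, and it has order d. -/
/-!
On `𝔱 = Hom(Λ, k)`, `w̃` is precomposition with `w⁻¹`, which sends `α∨` to `(wα)∨` as `w`
preserves `(·,·)`. On `𝔩` it is defined on the basis `X_{sec α}`; since every `α̃ ∈ Φ̃` is
`z^i · sec α`, `X_{z^i α̃} = ζ^i X_α̃` and `w` fixes `z`, we get `w̃(X_α̃) = X_{w(α̃)}` for all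
`α̃`. The coroots of roots and the `X_α̃` span `𝔥` (the roots generate `Λ` and `(·,·)` is
nondegenerate), and on them the defining brackets are `w`-equivariant because `w` preserves
`(·,·)` and `ε`. Finally `w̃ⁿ` lifts `wⁿ`, so `w̃ᵈ = 1`, while `w̃ⁿ = 1` forces `wⁿ = 1` since a
coroot determines its root.
-/

noncomputable section

/-- The coroot `α∨ ∈ Hom(Λ, k)`, `α∨(β) = (α, β)`. -/
def corootHom (k : Type*) [Field k] {Λ : Type*} [AddCommGroup Λ]
    (B : Λ →+ Λ →+ ℤ) (α : Λ) : Λ →+ k :=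
  (Int.castAddHom k).comp (B α)

/-- The subgroup `(1-w)Λ` of a lattice `Λ` with automorphism `w`. -/
def coinvSub {Λ : Type*} [AddCommGroup Λ] (w : AddAut Λ) : AddSubgroup Λ :=
  AddSubgroup.closure {y | ∃ x : Λ, y = x - w x}

open Submodule Set

section Coroot

variable (k : Type*) [Field k] {Λ : Type*} [AddCommGroup Λ] {B : Λ →+ Λ →+ ℤ}

theorem injective_of_posDef (hB : ∀ a, a ≠ 0 → 0 < B a a) : Function.Injective B :=
  (injective_iff_map_eq_zero B).2 fun a ha => by_contra fun hne => (hB a hne).ne' (by simp [ha])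

variable [CharZero k]

theorem corootHom_injective (hB : Function.Injective B) : Function.Injective (corootHom k B) :=
  fun _ _ h => hB <| AddMonoidHom.ext fun c => Int.cast_injective (α := k) (DFunLike.congr_fun h c)

/-- Over a field of characteristic zero a nondegenerate Gram matrix is invertible, so every
`f : Λ →+ k` is a combination of the coroots of a basis. -/
theorem span_range_corootHom [Module.Free ℤ Λ] [Module.Finite ℤ Λ] (hB : Function.Injective B) :
    span k (range (corootHom k B)) = ⊤ := by
  classical
  let b := Module.Free.chooseBasis ℤ Λ
  let G := LinearMap.BilinForm.toMatrix b
    ((addMonoidHomLequivInt ℤ).toLinearMap ∘ₗ B.toIntLinearMap)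
  have hG : G.det ≠ 0 := (LinearMap.BilinForm.nondegenerate_iff_det_ne_zero b).1 <|
    .ofSeparatingLeft fun x hx => hB <| by ext y; simpa using hx y
  have hGk : IsUnit (G.map (Int.castRingHom k)) := by
    rw [Matrix.isUnit_iff_isUnit_det, ← RingHom.mapMatrix_apply, ← RingHom.map_det,
      isUnit_iff_ne_zero]
    simpa using hG
  rw [eq_top_iff]
  rintro f -
  obtain ⟨t, ht⟩ := Matrix.vecMul_surjective_iff_isUnit.2 hGk (fun j => f (b j))
  have hf : f = ∑ i, t i • corootHom k B (b i) := by
    refine AddMonoidHom.toIntLinearMap_injective (b.ext fun j => ?_)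
    simp [← congrFun ht j, Matrix.vecMul, dotProduct, corootHom, G,
      LinearMap.BilinForm.toMatrix_apply]
  rw [hf]
  exact sum_mem fun i _ => smul_mem _ _ (subset_span ⟨_, rfl⟩)

theorem span_corootHom_image_eq_top [Module.Free ℤ Λ] [Module.Finite ℤ Λ]
    (hB : Function.Injective B) {R : Set Λ} (hR : AddSubgroup.closure R = ⊤) :
    span k (corootHom k B '' R) = ⊤ := by
  let φ := (AddMonoidHom.compHom (Int.castAddHom k)).comp B
  rw [eq_top_iff, ← span_range_corootHom k hB, span_le]
  rintro _ ⟨α, rfl⟩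
  have hα : φ α ∈ (AddSubgroup.closure R).map φ := ⟨α, hR ▸ AddSubgroup.mem_top α, rfl⟩
  rw [AddMonoidHom.map_closure] at hα
  exact (AddSubgroup.closure_le (span k (corootHom k B '' R)).toAddSubgroup).2 subset_span hα

end Coroot

theorem LinearMap.ext_on₂ {R M N P : Type*} [CommSemiring R] [AddCommMonoid M] [AddCommMonoid N]
    [AddCommMonoid P] [Module R M] [Module R N] [Module R P] {f g : M →ₗ[R] N →ₗ[R] P}
    {s : Set M} {t : Set N} (hs : span R s = ⊤) (ht : span R t = ⊤)
    (h : ∀ x ∈ s, ∀ y ∈ t, f x y = g x y) : f = g :=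
  LinearMap.ext_on hs fun x hx => LinearMap.ext_on ht fun y hy => h x hx y hy

theorem exists_linearMap_of_isCompl {R V H M ι : Type*} [CommRing R] [AddCommGroup V]
    [Module R V] [AddCommGroup H] [Module R H] [AddCommGroup M] [Module R M]
    {t : V →ₗ[R] H} (ht : Function.Injective t) {v : ι → H} (hv : LinearIndependent R v)
    (hc : IsCompl (LinearMap.range t) (span R (range v))) (φ : V →ₗ[R] M) (u : ι → M) :
    ∃ E : H →ₗ[R] M, E ∘ₗ t = φ ∧ E ∘ v = u := by
  let eT := LinearEquiv.ofInjective t ht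
  let bL := Module.Basis.span hv
  refine ⟨LinearMap.ofIsCompl hc (φ ∘ₗ eT.symm.toLinearMap) (bL.constr R u), ?_, ?_⟩
  · ext x
    have hx : t x = (eT x : H) := rfl
    rw [LinearMap.comp_apply, hx, LinearMap.ofIsCompl_apply_left]
    simp
  · funext i
    have hi : v i = (bL i : H) := by simp [bL, Module.Basis.span_apply]
    rw [Function.comp_apply, hi, LinearMap.ofIsCompl_apply_right, Module.Basis.constr_basis]

section Lift

variable {k : Type*} [Field k] {Λ : Type*} [AddCommGroup Λ] {B : Λ →+ Λ →+ ℤ}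
  {H : Type*} [AddCommGroup H] [Module k H] {tEmb : (Λ →+ k) →ₗ[k] H}
  {Lt : Type*} {pr : Lt → Λ} {X : Lt → H}

variable (k B tEmb pr X) in
def rootGenerators : Set H :=
  (fun α => tEmb (corootHom k B α)) '' {α | B α α = 2} ∪ X '' {a | B (pr a) (pr a) = 2}

theorem span_rootGenerators_eq_top [CharZero k] [Module.Free ℤ Λ] [Module.Finite ℤ Λ]
    (hB : Function.Injective B) (hBgen : AddSubgroup.closure {a : Λ | B a a = 2} = ⊤)
    (hspan : span k (range ⇑tEmb ∪ X '' {a : Lt | B (pr a) (pr a) = 2}) = ⊤) :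
    span k (rootGenerators k B tEmb pr X) = ⊤ := by
  unfold rootGenerators
  rw [span_union, ← image_image, span_image, span_corootHom_image_eq_top k hB hBgen,
    Submodule.map_top, ← hspan, span_union, ← LinearMap.coe_range, span_eq]

variable [Group Lt] {z : Lt} {ζ : k} {w : AddAut Λ} {wt : MulAut Lt}

theorem pr_zpow_mul (hpr : ∀ a b : Lt, pr (a * b) = pr a + pr b)
    (hker : ∀ a : Lt, pr a = 0 ↔ ∃ i : ℤ, a = z ^ i) (i : ℤ) (a : Lt) :
    pr (z ^ i * a) = pr a := by
  rw [hpr, (hker _).2 ⟨i, rfl⟩, zero_add]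

theorem exists_eq_zpow_mul_sec (hpr : ∀ a b : Lt, pr (a * b) = pr a + pr b)
    (hker : ∀ a : Lt, pr a = 0 ↔ ∃ i : ℤ, a = z ^ i) {sec : Λ → Lt}
    (hsec : ∀ α : Λ, pr (sec α) = α) (a : Lt) : ∃ i : ℤ, a = z ^ i * sec (pr a) := by
  have hdiv : pr (a * (sec (pr a))⁻¹) + pr (sec (pr a)) = pr a := by
    rw [← hpr, inv_mul_cancel_right]
  obtain ⟨i, hi⟩ := (hker _).1 (by rwa [hsec, add_eq_right] at hdiv)
  exact ⟨i, mul_inv_eq_iff_eq_mul.1 hi⟩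

theorem X_zpow_mul (hζ : ζ ≠ 0) (hpz : ∀ (i : ℤ) (a : Lt), pr (z ^ i * a) = pr a)
    (hXζ : ∀ a : Lt, B (pr a) (pr a) = 2 → X (z * a) = ζ • X a) (i : ℤ) {a : Lt}
    (ha : B (pr a) (pr a) = 2) : X (z ^ i * a) = ζ ^ i • X a := by
  induction i using Int.induction_on with
  | zero => simp
  | succ i ih =>
    have hz : z ^ ((i : ℤ) + 1) * a = z * (z ^ (i : ℤ) * a) := by group
    rw [hz, hXζ _ (by rwa [hpz]), ih, smul_smul, zpow_add_one₀ hζ, mul_comm]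
  | pred i ih =>
    have hz : X (z ^ (-(i : ℤ)) * a) = ζ • X (z ^ (-(i : ℤ) - 1) * a) := by
      rw [← hXζ _ (by rwa [hpz])]
      congr 1
      group
    rw [ih] at hz
    rw [zpow_sub_one₀ hζ, mul_comm, ← smul_smul, hz, inv_smul_smul₀ hζ]

theorem span_X_eq_span_X_sec (hζ : ζ ≠ 0) (hpr : ∀ a b : Lt, pr (a * b) = pr a + pr b)
    (hker : ∀ a : Lt, pr a = 0 ↔ ∃ i : ℤ, a = z ^ i)
    (hXζ : ∀ a : Lt, B (pr a) (pr a) = 2 → X (z * a) = ζ • X a)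
    {sec : Λ → Lt} (hsec : ∀ α : Λ, pr (sec α) = α) :
    span k (X '' {a : Lt | B (pr a) (pr a) = 2}) =
      span k (range fun α : {α : Λ // B α α = 2} => X (sec α)) := by
  refine le_antisymm (span_le.2 ?_) (span_mono ?_)
  · rintro _ ⟨a, ha, rfl⟩
    obtain ⟨i, hi⟩ := exists_eq_zpow_mul_sec hpr hker hsec a
    rw [hi, X_zpow_mul hζ (pr_zpow_mul hpr hker) hXζ i (by rwa [hsec])]
    exact smul_mem _ _ (subset_span ⟨⟨pr a, ha⟩, rfl⟩)
  · rintro _ ⟨α, rfl⟩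
    exact ⟨sec α, by simpa [hsec] using α.2, rfl⟩

variable (k B tEmb pr X) in
/-- `E` plays the role of `w̃` for the pair `(w, wt)`. -/
def IsLiftOf (E : Module.End k H) (w : AddAut Λ) (wt : MulAut Lt) : Prop :=
  (∀ α, E (tEmb (corootHom k B α)) = tEmb (corootHom k B (w α))) ∧
    ∀ a, B (pr a) (pr a) = 2 → E (X a) = X (wt a)

theorem root_map (hwB : ∀ a b : Λ, B (w a) (w b) = B a b)
    (hwtpr : ∀ a : Lt, pr (wt a) = w (pr a)) {a : Lt} (ha : B (pr a) (pr a) = 2) :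
    B (pr (wt a)) (pr (wt a)) = 2 := by
  rwa [hwtpr, hwB]

theorem exists_isLiftOf (hwB : ∀ a b : Λ, B (w a) (w b) = B a b)
    (hwtpr : ∀ a : Lt, pr (wt a) = w (pr a)) (hwtz : wt z = z) (hζ : ζ ≠ 0)
    (hpr : ∀ a b : Lt, pr (a * b) = pr a + pr b)
    (hker : ∀ a : Lt, pr a = 0 ↔ ∃ i : ℤ, a = z ^ i)
    (hXζ : ∀ a : Lt, B (pr a) (pr a) = 2 → X (z * a) = ζ • X a)
    (htinj : Function.Injective tEmb) {sec : Λ → Lt} (hsec : ∀ α : Λ, pr (sec α) = α)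
    (hXind : LinearIndependent k (fun α : {α : Λ // B α α = 2} => X (sec α)))
    (hspan : span k (range ⇑tEmb ∪ X '' {a : Lt | B (pr a) (pr a) = 2}) = ⊤)
    (hdisj : Disjoint (LinearMap.range tEmb) (span k (X '' {a : Lt | B (pr a) (pr a) = 2}))) :
    ∃ E, IsLiftOf k B tEmb pr X E w wt := by
  have hL := span_X_eq_span_X_sec hζ hpr hker hXζ hsec
  have hc : IsCompl (LinearMap.range tEmb)
      (span k (range fun α : {α // B α α = 2} => X (sec α))) := by
    rw [← hL]
    refine ⟨hdisj, codisjoint_iff.2 ?_⟩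
    rw [← hspan, span_union, ← LinearMap.coe_range, span_eq]
  let precomp : (Λ →+ k) →ₗ[k] (Λ →+ k) :=
    { toFun := fun f => f.comp (w.symm : Λ →+ Λ)
      map_add' := fun f g => AddMonoidHom.add_comp f g _
      map_smul' := fun _ _ => rfl }
  obtain ⟨E, hEt, hEX⟩ := exists_linearMap_of_isCompl htinj hXind hc (tEmb ∘ₗ precomp)
    (fun α => X (wt (sec α)))
  refine ⟨E, fun α => ?_, fun a ha => ?_⟩
  · rw [← LinearMap.comp_apply E, hEt, LinearMap.comp_apply]
    refine congrArg tEmb (AddMonoidHom.ext fun β => ?_)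
    simp [precomp, corootHom, ← hwB α (w.symm β)]
  · have hpz := pr_zpow_mul hpr hker
    have hs : B (pr (sec (pr a))) (pr (sec (pr a))) = 2 := by rwa [hsec]
    obtain ⟨i, hi⟩ := exists_eq_zpow_mul_sec hpr hker hsec a
    calc E (X a) = E (ζ ^ i • X (sec (pr a))) := by rw [← X_zpow_mul hζ hpz hXζ i hs, ← hi]
      _ = ζ ^ i • X (wt (sec (pr a))) := by rw [map_smul, ← congrFun hEX ⟨pr a, ha⟩]; rfl
      _ = X (z ^ i * wt (sec (pr a))) := (X_zpow_mul hζ hpz hXζ i (root_map hwB hwtpr hs)).symm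
      _ = X (wt a) := by conv_rhs => rw [hi, map_mul, map_zpow, hwtz]

namespace IsLiftOf

variable {E : Module.End k H}

theorem pow (hE : IsLiftOf k B tEmb pr X E w wt)
    (hroot : ∀ a : Lt, B (pr a) (pr a) = 2 → B (pr (wt a)) (pr (wt a)) = 2) (n : ℕ) :
    IsLiftOf k B tEmb pr X (E ^ n) (n • w) (wt ^ n) := by
  induction n with
  | zero => exact ⟨fun α => rfl, fun a _ => rfl⟩
  | succ n ih =>
    refine ⟨fun α => ?_, fun a ha => ?_⟩
    · rw [pow_succ, Module.End.mul_apply, hE.1, ih.1, succ_nsmul]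
      rfl
    · rw [pow_succ, Module.End.mul_apply, hE.2 a ha, ih.2 _ (hroot a ha), pow_succ,
        MulAut.mul_apply]

theorem eq_one (hE : IsLiftOf k B tEmb pr X E 0 1)
    (hS : span k (rootGenerators k B tEmb pr X) = ⊤) : E = 1 := by
  refine LinearMap.ext_on hS ?_
  rintro _ (⟨α, -, rfl⟩ | ⟨a, ha, rfl⟩)
  · exact hE.1 α
  · exact hE.2 a ha

theorem eq_zero (hE : IsLiftOf k B tEmb pr X 1 w wt) (htinj : Function.Injective tEmb)
    (hc : Function.Injective (corootHom k B)) : w = 0 :=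
  AddEquiv.ext fun α => hc (htinj (hE.1 α).symm)

theorem orderOf_eq (hE : IsLiftOf k B tEmb pr X E w wt)
    (hroot : ∀ a : Lt, B (pr a) (pr a) = 2 → B (pr (wt a)) (pr (wt a)) = 2)
    (hwt : wt ^ addOrderOf w = 1) (hS : span k (rootGenerators k B tEmb pr X) = ⊤)
    (htinj : Function.Injective tEmb) (hc : Function.Injective (corootHom k B)) :
    orderOf E = addOrderOf w := by
  refine Nat.dvd_antisymm (orderOf_dvd_of_pow_eq_one ?_) (addOrderOf_dvd_of_nsmul_eq_zero ?_)
  · have h := hE.pow hroot (addOrderOf w)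
    rw [addOrderOf_nsmul_eq_zero, hwt] at h
    exact h.eq_one hS
  · have h := hE.pow hroot (orderOf E)
    rw [pow_orderOf_eq_one] at h
    exact h.eq_zero htinj hc

section Bracket

variable {ε : Λ → Λ → kˣ} {br : H →ₗ[k] H →ₗ[k] H}

theorem map_br_X_X (hE : IsLiftOf k B tEmb pr X E w wt)
    (hwB : ∀ a b : Λ, B (w a) (w b) = B a b) (hwtpr : ∀ a : Lt, pr (wt a) = w (pr a))
    (hwtz : wt z = z) (hεw : ∀ a b : Λ, ε (w a) (w b) = ε a b)
    (hpr : ∀ a b : Lt, pr (a * b) = pr a + pr b)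
    (hker : ∀ a : Lt, pr a = 0 ↔ ∃ i : ℤ, a = z ^ i)
    (hbr_XX₀ : ∀ a b : Lt, B (pr a) (pr a) = 2 → B (pr b) (pr b) = 2 →
      pr a + pr b = 0 → ∀ i : ℤ, a * b = z ^ i →
      br (X a) (X b) = (((ε (pr a) (pr b) : k)) * ζ ^ i) • tEmb (corootHom k B (pr a)))
    (hbr_XXΦ : ∀ a b : Lt, B (pr a) (pr a) = 2 → B (pr b) (pr b) = 2 →
      B (pr a + pr b) (pr a + pr b) = 2 →
      br (X a) (X b) = ((ε (pr a) (pr b) : k)) • X (a * b))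
    (hbr_XXo : ∀ a b : Lt, B (pr a) (pr a) = 2 → B (pr b) (pr b) = 2 →
      pr a + pr b ≠ 0 → B (pr a + pr b) (pr a + pr b) ≠ 2 →
      br (X a) (X b) = 0)
    {a b : Lt} (ha : B (pr a) (pr a) = 2) (hb : B (pr b) (pr b) = 2) :
    E (br (X a) (X b)) = br (E (X a)) (E (X b)) := by
  have ha' := root_map hwB hwtpr ha
  have hb' := root_map hwB hwtpr hb
  have hsum : pr (wt a) + pr (wt b) = w (pr a + pr b) := by rw [hwtpr, hwtpr, map_add]
  rw [hE.2 a ha, hE.2 b hb]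
  by_cases h0 : pr a + pr b = 0
  · obtain ⟨i, hi⟩ := (hker (a * b)).1 (by rw [hpr, h0])
    rw [hbr_XX₀ a b ha hb h0 i hi, map_smul, hE.1,
      hbr_XX₀ _ _ ha' hb' (by rw [hsum, h0, map_zero]) i (by rw [← map_mul, hi, map_zpow, hwtz]),
      hwtpr, hwtpr, hεw]
  by_cases h2 : B (pr a + pr b) (pr a + pr b) = 2
  · rw [hbr_XXΦ a b ha hb h2, map_smul, hE.2 _ (by rwa [hpr]),
      hbr_XXΦ _ _ ha' hb' (by rwa [hsum, hwB]), hwtpr, hwtpr, hεw, map_mul]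
  · rw [hbr_XXo a b ha hb h0 h2, map_zero,
      hbr_XXo _ _ ha' hb' (by rwa [hsum, AddEquivClass.map_ne_zero_iff]) (by rwa [hsum, hwB])]

theorem map_br (hE : IsLiftOf k B tEmb pr X E w wt)
    (hS : span k (rootGenerators k B tEmb pr X) = ⊤)
    (hwB : ∀ a b : Λ, B (w a) (w b) = B a b) (hwtpr : ∀ a : Lt, pr (wt a) = w (pr a))
    (hwtz : wt z = z) (hεw : ∀ a b : Λ, ε (w a) (w b) = ε a b)
    (hpr : ∀ a b : Lt, pr (a * b) = pr a + pr b)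
    (hker : ∀ a : Lt, pr a = 0 ↔ ∃ i : ℤ, a = z ^ i)
    (hbr_tt : ∀ f g : Λ →+ k, br (tEmb f) (tEmb g) = 0)
    (hbr_tX : ∀ (α : Λ) (a : Lt), B α α = 2 → B (pr a) (pr a) = 2 →
      br (tEmb (corootHom k B α)) (X a) = ((B α (pr a) : k)) • X a)
    (hbr_Xt : ∀ (α : Λ) (a : Lt), B α α = 2 → B (pr a) (pr a) = 2 →
      br (X a) (tEmb (corootHom k B α)) = (-(B α (pr a) : k)) • X a)
    (hbr_XX₀ : ∀ a b : Lt, B (pr a) (pr a) = 2 → B (pr b) (pr b) = 2 →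
      pr a + pr b = 0 → ∀ i : ℤ, a * b = z ^ i →
      br (X a) (X b) = (((ε (pr a) (pr b) : k)) * ζ ^ i) • tEmb (corootHom k B (pr a)))
    (hbr_XXΦ : ∀ a b : Lt, B (pr a) (pr a) = 2 → B (pr b) (pr b) = 2 →
      B (pr a + pr b) (pr a + pr b) = 2 →
      br (X a) (X b) = ((ε (pr a) (pr b) : k)) • X (a * b))
    (hbr_XXo : ∀ a b : Lt, B (pr a) (pr a) = 2 → B (pr b) (pr b) = 2 →
      pr a + pr b ≠ 0 → B (pr a + pr b) (pr a + pr b) ≠ 2 →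
      br (X a) (X b) = 0)
    (x y : H) : E (br x y) = br (E x) (E y) := by
  suffices h : br.compr₂ E = br.compl₁₂ E E from LinearMap.congr_fun₂ h x y
  refine LinearMap.ext_on₂ hS hS ?_
  rintro _ (⟨α, hα, rfl⟩ | ⟨a, ha, rfl⟩) _ (⟨β, hβ, rfl⟩ | ⟨b, hb, rfl⟩)
  · simp only [LinearMap.compr₂_apply, LinearMap.compl₁₂_apply, hE.1, hbr_tt, map_zero]
  · simp only [LinearMap.compr₂_apply, LinearMap.compl₁₂_apply]
    rw [hbr_tX α b hα hb, map_smul, hE.1, hE.2 b hb,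
      hbr_tX _ _ (by rwa [hwB]) (root_map hwB hwtpr hb), hwtpr, hwB]
  · simp only [LinearMap.compr₂_apply, LinearMap.compl₁₂_apply]
    rw [hbr_Xt β a hβ ha, map_smul, hE.1, hE.2 a ha,
      hbr_Xt _ _ (by rwa [hwB]) (root_map hwB hwtpr ha), hwtpr, hwB]
  · exact hE.map_br_X_X hwB hwtpr hwtz hεw hpr hker hbr_XX₀ hbr_XXΦ hbr_XXo ha hb

end Bracket

end IsLiftOf

end Lift

theorem lift_of_w_is_Lie_algebra_automorphism_of_order_d_general
    (k : Type*) [Field k] [CharZero k]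
    (d : ℕ) (hd : 0 < d) (ζ : k) (hζ : IsPrimitiveRoot ζ d)
    -- the simply laced root lattice Λ with elliptic automorphism w of order d
    (Λ : Type*) [AddCommGroup Λ] [Module.Free ℤ Λ] [Module.Finite ℤ Λ]
    (B : Λ →+ Λ →+ ℤ)
    (hBpos : ∀ a : Λ, a ≠ 0 → 0 < B a a)
    (hBgen : AddSubgroup.closure {a : Λ | B a a = 2} = ⊤)
    (w : AddAut Λ) (hwB : ∀ a b : Λ, B (w a) (w b) = B a b)
    (hword : addOrderOf w = d)
    -- the central extension Λ̃ of Λ by ⟨ζ⟩ (pulled back from ℋ over the coinvariants)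
    (Lt : Type*) [Group Lt]
    (z : Lt)
    (pr : Lt → Λ) (hpr : ∀ a b : Lt, pr (a * b) = pr a + pr b)
    (hker : ∀ a : Lt, pr a = 0 ↔ ∃ i : ℤ, a = z ^ i)
    -- the biadditive pairing ε, making (Λ, w, ℋ, ε) an input datum
    (ε : Λ → Λ → kˣ)
    (hεw : ∀ a b : Λ, ε (w a) (w b) = ε a b)
    -- the underlying vector space 𝔥 = 𝔱 ⊕ 𝔩
    (H : Type*) [AddCommGroup H] [Module k H]
    (tEmb : (Λ →+ k) →ₗ[k] H) (htinj : Function.Injective tEmb)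
    (X : Lt → H)
    (hXζ : ∀ a : Lt, B (pr a) (pr a) = 2 → X (z * a) = ζ • X a)
    (sec : Λ → Lt) (hsec : ∀ α : Λ, pr (sec α) = α)
    (hXind : LinearIndependent k (fun α : {α : Λ // B α α = 2} => X (sec α)))
    (hspan : Submodule.span k
      (Set.range ⇑tEmb ∪ X '' {a : Lt | B (pr a) (pr a) = 2}) = ⊤)
    (hdisj : Disjoint (LinearMap.range tEmb)
      (Submodule.span k (X '' {a : Lt | B (pr a) (pr a) = 2})))
    -- the bracket of the construction
    (br : H →ₗ[k] H →ₗ[k] H)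
    (hbr_tt : ∀ f g : Λ →+ k, br (tEmb f) (tEmb g) = 0)
    (hbr_tX : ∀ (α : Λ) (a : Lt), B α α = 2 → B (pr a) (pr a) = 2 →
      br (tEmb (corootHom k B α)) (X a) = ((B α (pr a) : k)) • X a)
    (hbr_Xt : ∀ (α : Λ) (a : Lt), B α α = 2 → B (pr a) (pr a) = 2 →
      br (X a) (tEmb (corootHom k B α)) = (-(B α (pr a) : k)) • X a)
    (hbr_XX₀ : ∀ a b : Lt, B (pr a) (pr a) = 2 → B (pr b) (pr b) = 2 →
      pr a + pr b = 0 → ∀ i : ℤ, a * b = z ^ i →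
      br (X a) (X b) = (((ε (pr a) (pr b) : k)) * ζ ^ i) • tEmb (corootHom k B (pr a)))
    (hbr_XXΦ : ∀ a b : Lt, B (pr a) (pr a) = 2 → B (pr b) (pr b) = 2 →
      B (pr a + pr b) (pr a + pr b) = 2 →
      br (X a) (X b) = ((ε (pr a) (pr b) : k)) • X (a * b))
    (hbr_XXo : ∀ a b : Lt, B (pr a) (pr a) = 2 → B (pr b) (pr b) = 2 →
      pr a + pr b ≠ 0 → B (pr a + pr b) (pr a + pr b) ≠ 2 →
      br (X a) (X b) = 0)
    -- the lift of w to Λ̃ (acting as w on Λ and trivially on ℋ)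
    (wt : MulAut Lt) (hwtpr : ∀ a : Lt, pr (wt a) = w (pr a))
    (hwtz : wt z = z) (hwtd : wt ^ d = 1)
    :
    ∃ e : H ≃ₗ[k] H,
      (∀ α : Λ, B α α = 2 →
        e (tEmb (corootHom k B α)) = tEmb (corootHom k B (w α))) ∧
      (∀ a : Lt, B (pr a) (pr a) = 2 → e (X a) = X (wt a)) ∧
      (∀ x y : H, e (br x y) = br (e x) (e y)) ∧
      orderOf e = d := by
  have hζ0 : ζ ≠ 0 := hζ.ne_zero hd.ne'
  have hB := injective_of_posDef hBpos
  have hS := span_rootGenerators_eq_top hB hBgen hspan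
  obtain ⟨E, hE⟩ := exists_isLiftOf hwB hwtpr hwtz hζ0 hpr hker hXζ htinj hsec hXind hspan hdisj
  have hord : orderOf E = d := hword ▸ hE.orderOf_eq (fun _ => root_map hwB hwtpr)
    (hword ▸ hwtd) hS htinj (corootHom_injective k hB)
  let u := Units.ofPowEqOne E d (hord ▸ pow_orderOf_eq_one E) hd.ne'
  refine ⟨LinearMap.GeneralLinearGroup.generalLinearEquiv k H u, fun α _ => hE.1 α, hE.2,
    hE.map_br hS hwB hwtpr hwtz hεw hpr hker hbr_tt hbr_tX hbr_Xt hbr_XX₀ hbr_XXΦ hbr_XXo, ?_⟩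
  rw [MulEquiv.orderOf_eq, ← orderOf_units, Units.val_ofPowEqOne, hord]

/-- **Proposition 2.4.** The map `w̃` determined by `w̃(α∨) = (wα)∨` and
`w̃(X_α̃) = X_{w(α̃)}` is a Lie algebra automorphism of `𝔥`, of order `d`. -/
theorem lift_of_w_is_Lie_algebra_automorphism_of_order_d
    (k : Type*) [Field k] [CharZero k]
    (d : ℕ) (hd : 0 < d) (ζ : k) (hζ : IsPrimitiveRoot ζ d)
    -- the simply laced root lattice Λ with elliptic automorphism w of order d
    (Λ : Type*) [AddCommGroup Λ] [Module.Free ℤ Λ] [Module.Finite ℤ Λ]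
    (B : Λ →+ Λ →+ ℤ)
    (hBsymm : ∀ a b : Λ, B a b = B b a)
    (hBpos : ∀ a : Λ, a ≠ 0 → 0 < B a a)
    (hBgen : AddSubgroup.closure {a : Λ | B a a = 2} = ⊤)
    (w : AddAut Λ) (hwB : ∀ a b : Λ, B (w a) (w b) = B a b)
    (hword : addOrderOf w = d)
    (hell : Finite (Λ ⧸ coinvSub w))
    -- the central extension Λ̃ of Λ by ⟨ζ⟩ (pulled back from ℋ over the coinvariants)
    (Lt : Type*) [Group Lt]
    (z : Lt) (hzc : z ∈ Subgroup.center Lt) (hzord : orderOf z = d)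
    (pr : Lt → Λ) (hpr : ∀ a b : Lt, pr (a * b) = pr a + pr b)
    (hprs : Function.Surjective pr)
    (hker : ∀ a : Lt, pr a = 0 ↔ ∃ i : ℤ, a = z ^ i)
    (hfac : ∀ a b c : Lt, pr a - pr b ∈ coinvSub w →
      a * c * a⁻¹ * c⁻¹ = b * c * b⁻¹ * c⁻¹)
    -- the biadditive pairing ε, making (Λ, w, ℋ, ε) an input datum
    (ε : Λ → Λ → kˣ)
    (hεadd₁ : ∀ a b c : Λ, ε (a + b) c = ε a c * ε b c)
    (hεadd₂ : ∀ a b c : Λ, ε a (b + c) = ε a b * ε a c)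
    (hεcomm : ∀ a b : Lt, B (pr a) (pr a) = 2 → B (pr b) (pr b) = 2 →
      B (pr a) (pr b) = -1 → ∀ i : ℤ, b * a * b⁻¹ * a⁻¹ = z ^ i →
      ((ε (pr a) (pr b) : k) / ((ε (pr b) (pr a) : k))) = -(ζ ^ i))
    (hεw : ∀ a b : Λ, ε (w a) (w b) = ε a b)
    -- the underlying vector space 𝔥 = 𝔱 ⊕ 𝔩
    (H : Type*) [AddCommGroup H] [Module k H]
    (tEmb : (Λ →+ k) →ₗ[k] H) (htinj : Function.Injective tEmb)
    (X : Lt → H)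
    (hXζ : ∀ a : Lt, B (pr a) (pr a) = 2 → X (z * a) = ζ • X a)
    (sec : Λ → Lt) (hsec : ∀ α : Λ, pr (sec α) = α)
    (hXind : LinearIndependent k (fun α : {α : Λ // B α α = 2} => X (sec α)))
    (hspan : Submodule.span k
      (Set.range ⇑tEmb ∪ X '' {a : Lt | B (pr a) (pr a) = 2}) = ⊤)
    (hdisj : Disjoint (LinearMap.range tEmb)
      (Submodule.span k (X '' {a : Lt | B (pr a) (pr a) = 2})))
    -- the bracket of the construction
    (br : H →ₗ[k] H →ₗ[k] H)
    (hbr_tt : ∀ f g : Λ →+ k, br (tEmb f) (tEmb g) = 0)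
    (hbr_tX : ∀ (α : Λ) (a : Lt), B α α = 2 → B (pr a) (pr a) = 2 →
      br (tEmb (corootHom k B α)) (X a) = ((B α (pr a) : k)) • X a)
    (hbr_Xt : ∀ (α : Λ) (a : Lt), B α α = 2 → B (pr a) (pr a) = 2 →
      br (X a) (tEmb (corootHom k B α)) = (-(B α (pr a) : k)) • X a)
    (hbr_XX₀ : ∀ a b : Lt, B (pr a) (pr a) = 2 → B (pr b) (pr b) = 2 →
      pr a + pr b = 0 → ∀ i : ℤ, a * b = z ^ i →
      br (X a) (X b) = (((ε (pr a) (pr b) : k)) * ζ ^ i) • tEmb (corootHom k B (pr a)))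
    (hbr_XXΦ : ∀ a b : Lt, B (pr a) (pr a) = 2 → B (pr b) (pr b) = 2 →
      B (pr a + pr b) (pr a + pr b) = 2 →
      br (X a) (X b) = ((ε (pr a) (pr b) : k)) • X (a * b))
    (hbr_XXo : ∀ a b : Lt, B (pr a) (pr a) = 2 → B (pr b) (pr b) = 2 →
      pr a + pr b ≠ 0 → B (pr a + pr b) (pr a + pr b) ≠ 2 →
      br (X a) (X b) = 0)
    -- the lift of w to Λ̃ (acting as w on Λ and trivially on ℋ)
    (wt : MulAut Lt) (hwtpr : ∀ a : Lt, pr (wt a) = w (pr a))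
    (hwtz : wt z = z) (hwtd : wt ^ d = 1)
    :
    ∃ e : H ≃ₗ[k] H,
      (∀ α : Λ, B α α = 2 →
        e (tEmb (corootHom k B α)) = tEmb (corootHom k B (w α))) ∧
      (∀ a : Lt, B (pr a) (pr a) = 2 → e (X a) = X (wt a)) ∧
      (∀ x y : H, e (br x y) = br (e x) (e y)) ∧
      orderOf e = d :=
  lift_of_w_is_Lie_algebra_automorphism_of_order_d_general k d hd ζ hζ Λ B hBpos hBgen w hwB hword
    Lt z pr hpr hker ε hεw H tEmb htinj X hXζ sec hsec hXind hspan hdisj br hbr_tt hbr_tX hbr_Xt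
    hbr_XX₀ hbr_XXΦ hbr_XXo wt hwtpr hwtz hwtd

end
end

section
/- Let M(t) be the minimal polynomial of w, set m := M(1), assume m divides d, set d₀ := d/m, ζ_m := ζ^{d₀} (a primitive m-th root of unity), and M₀(t) := (M(t) − M(1))/(t − 1), a polynomial with integer coefficients. Then for all α, β ∈ Λ: ζ_m^{(α, M₀(w)β)} = ζ^{Σ_{j=1}^{d−1} j·(w^jα, β)}. -/
noncomputable section

/-- The automorphism `w` as a `ℤ`-linear endomorphism of `Λ`. -/
def wLin {Λ : Type*} [AddCommGroup Λ] (w : AddAut Λ) : Λ →ₗ[ℤ] Λ :=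
  AddMonoidHom.toIntLinearMap (AddEquiv.toAddMonoidHom (w : Λ ≃+ Λ))

section Aux
open TensorProduct
set_option linter.unusedSectionVars false

variable {Λ : Type*} [AddCommGroup Λ] (w : AddAut Λ)

lemma wLin_apply (x : Λ) : wLin w x = w x := rfl

lemma wLin_pow_apply (j : ℕ) : ∀ x : Λ, ((wLin w) ^ j) x = (j • w) x := by
  induction j with
  | zero => intro x; simp
  | succ n ih =>
      intro x
      rw [pow_succ, succ_nsmul]
      simp only [Module.End.mul_apply, AddAut.add_apply]
      exact ih (w x)

variable [Module.Free ℤ Λ] [Module.Finite ℤ Λ]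

lemma one_tmul_inj : Function.Injective (fun x : Λ => (1:ℚ) ⊗ₜ[ℤ] x) := by
  classical
  intro x y hxy
  let b := Module.Free.chooseBasis ℤ Λ
  have h : ∀ i, (b.repr x i : ℚ) = (b.repr y i : ℚ) := by
    intro i
    have := congrArg (fun z => (b.baseChange ℚ).repr z i) hxy
    simpa [Module.Basis.baseChange_repr_tmul] using this
  apply b.ext_elem
  intro i
  exact_mod_cast h i

lemma sub_baseChange_surjective (hell : Finite (Λ ⧸ coinvSub w)) :
    Function.Surjective ⇑((1 : Module.End ℚ (ℚ ⊗[ℤ] Λ)) - LinearMap.baseChange ℚ (wLin w)) := by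
  classical
  set L := (1 : Module.End ℚ (ℚ ⊗[ℤ] Λ)) - LinearMap.baseChange ℚ (wLin w) with hL
  set n := Nat.card (Λ ⧸ coinvSub w) with hn
  have hn0 : 0 < n := Nat.card_pos
  have hkey : ∀ x : Λ, ∃ y : Λ, y - w y = n • x := by
    intro x
    have h1 : ((n • x : Λ) : Λ ⧸ coinvSub w) = 0 := by
      rw [QuotientAddGroup.mk_nsmul]
      exact card_nsmul_eq_zero'
    have h2 : n • x ∈ coinvSub w := (QuotientAddGroup.eq_zero_iff _).mp h1
    -- the generating set is contained in the range of the hom x ↦ x - w x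
    let h : Λ →+ Λ := AddMonoidHom.id Λ - (w : Λ ≃+ Λ).toAddMonoidHom
    have hsub : coinvSub w ≤ h.range := by
      apply AddSubgroup.closure_le _ |>.mpr
      rintro y ⟨x', rfl⟩
      exact ⟨x', rfl⟩
    obtain ⟨y, hy⟩ := hsub h2
    exact ⟨y, hy⟩
  intro z
  induction z using TensorProduct.induction_on with
  | zero => exact ⟨0, map_zero _⟩
  | tmul q x =>
      obtain ⟨y, hy⟩ := hkey x
      refine ⟨(q * (n : ℚ)⁻¹) • ((1:ℚ) ⊗ₜ[ℤ] y), ?_⟩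
      have hLy : L ((1:ℚ) ⊗ₜ[ℤ] y) = (n : ℚ) • ((1:ℚ) ⊗ₜ[ℤ] x) := by
        have : L ((1:ℚ) ⊗ₜ[ℤ] y) = (1:ℚ) ⊗ₜ[ℤ] (y - w y) := by
          simp [hL, LinearMap.sub_apply, LinearMap.baseChange_tmul, wLin_apply,
            TensorProduct.tmul_sub]
        rw [this, hy]
        rw [TensorProduct.tmul_smul]
        rw [Nat.cast_smul_eq_nsmul]
      rw [map_smul, hLy, smul_smul, mul_assoc,
        inv_mul_cancel₀ (by exact_mod_cast hn0.ne' : (n:ℚ) ≠ 0), mul_one]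
      rw [TensorProduct.smul_tmul', smul_eq_mul, mul_one]
  | add u v hu hv =>
      obtain ⟨a, ha⟩ := hu
      obtain ⟨b, hb⟩ := hv
      exact ⟨a + b, by rw [map_add, ha, hb]⟩

end Aux

/-- **Lemma 2.9.** Let `M(t)` be the minimal polynomial of `w` (over `ℚ`), `m := M(1)`
with `m ∣ d`, `d₀ := d/m`, `ζ_m := ζ^{d₀}`, and `M₀(t) := (M(t) − M(1))/(t − 1)` (a
polynomial with integer coefficients).  Then for all `α, β ∈ Λ`:
`ζ_m^{(α, M₀(w)β)} = ζ^{∑_{j=1}^{d−1} j·(w^jα, β)}`, i.e. the pairings of Reeder and of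
Lepowsky coincide. -/
theorem reeder_pairing_equals_lepowsky_pairing
    (k : Type*) [Field k] [CharZero k]
    (d : ℕ) (hd : 0 < d) (ζ : k) (hζ : IsPrimitiveRoot ζ d)
    (Λ : Type*) [AddCommGroup Λ] [Module.Free ℤ Λ] [Module.Finite ℤ Λ]
    (B : Λ →+ Λ →+ ℤ)
    (hBsymm : ∀ a b : Λ, B a b = B b a)
    (hBpos : ∀ a : Λ, a ≠ 0 → 0 < B a a)
    (hBgen : AddSubgroup.closure {a : Λ | B a a = 2} = ⊤)
    (w : AddAut Λ) (hwB : ∀ a b : Λ, B (w a) (w b) = B a b)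
    (hword : addOrderOf w = d)
    (hell : Finite (Λ ⧸ coinvSub w))
    -- m := M(1), where M is the minimal polynomial of w; m divides d
    (m : ℕ) (hm : 0 < m)
    (hmval : (m : ℚ) = Polynomial.eval 1 (minpoly ℚ (LinearMap.baseChange ℚ (wLin w))))
    (hmd : m ∣ d)
    -- M₀(t) = (M(t) - M(1))/(t - 1), a polynomial with integer coefficients
    (M0 : Polynomial ℤ)
    (hM0 : (Polynomial.X - 1) * M0.map (Int.castRingHom ℚ) =
      minpoly ℚ (LinearMap.baseChange ℚ (wLin w)) - Polynomial.C (m : ℚ)) :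
    ∀ α β : Λ,
      (ζ ^ (d / m)) ^ (B α ((Polynomial.aeval (wLin w) M0) β)) =
        ζ ^ (∑ j ∈ Finset.Ico 1 d, (j : ℤ) * B ((j • w) α) β) := by
  classical
  intro α β
  have hζ0 : ζ ≠ 0 := hζ.ne_zero hd.ne'
  set W : Module.End ℤ Λ := wLin w with hWdef
  set Wq : Module.End ℚ (TensorProduct ℤ ℚ Λ) := LinearMap.baseChange ℚ (wLin w) with hWqdef
  have hwd : d • w = 0 := by rw [← hword]; exact addOrderOf_nsmul_eq_zero w
  have hWd : W ^ d = 1 := by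
    ext x
    rw [Module.End.one_apply, hWdef, wLin_pow_apply, hwd]
    rfl
  have hWqd : Wq ^ d = 1 := by
    rw [hWqdef, ← LinearMap.baseChange_pow, ← hWdef, hWd, LinearMap.baseChange_one]
  -- the evaluated M0 relation over ℚ
  set Aq : Module.End ℚ (TensorProduct ℤ ℚ Λ) :=
    Polynomial.aeval Wq (M0.map (Int.castRingHom ℚ)) with hAqdef
  have hLA : (1 - Wq) * Aq = (m : ℚ) • 1 := by
    have h0 : Polynomial.aeval Wq (minpoly ℚ Wq) = 0 := minpoly.aeval ℚ Wq
    have h := congrArg (Polynomial.aeval Wq) hM0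
    simp only [map_mul, map_sub, Polynomial.aeval_X, map_one, Polynomial.aeval_C, h0,
      zero_sub] at h
    rw [← hAqdef] at h
    rw [sub_mul, one_mul] at h ⊢
    rw [← neg_sub (Wq * Aq) Aq, h, neg_neg, Algebra.algebraMap_eq_smul_one]
  set Pq : Module.End ℚ (TensorProduct ℤ ℚ Λ) := ∑ j ∈ Finset.range d, Wq ^ j with hPqdef
  set Sq : Module.End ℚ (TensorProduct ℤ ℚ Λ) := ∑ j ∈ Finset.range d, (j : ℤ) • Wq ^ j
    with hSqdef
  have hsucc : ∑ j ∈ Finset.range d, Wq ^ (j + 1) = Pq := by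
    have h := Finset.sum_range_succ' (fun j => Wq ^ j) d
    rw [Finset.sum_range_succ] at h
    rw [pow_zero] at h
    rw [hWqd] at h
    rw [hPqdef]
    exact (add_right_cancel h).symm
  have hWP : Wq * Pq = Pq := by
    rw [hPqdef, Finset.mul_sum]
    calc ∑ j ∈ Finset.range d, Wq * Wq ^ j
        = ∑ j ∈ Finset.range d, Wq ^ (j + 1) := by
          refine Finset.sum_congr rfl fun j _ => ?_
          rw [pow_succ']
      _ = Pq := hsucc
  have hWS : Wq * Sq = Sq + (d : ℤ) • (1 : Module.End ℚ (TensorProduct ℤ ℚ Λ)) - Pq := by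
    have h := Finset.sum_range_succ' (fun j => (j : ℤ) • Wq ^ j) d
    rw [Finset.sum_range_succ] at h
    simp only [Nat.cast_zero, zero_smul, add_zero, pow_zero] at h
    -- h : Sq + (d:ℤ) • Wq ^ d = ∑ j ∈ range d, ((j+1 : ℕ):ℤ) • Wq ^ (j+1)
    have hrhs : ∑ j ∈ Finset.range d, ((j + 1 : ℕ) : ℤ) • Wq ^ (j + 1)
        = (∑ j ∈ Finset.range d, (j : ℤ) • Wq ^ (j + 1)) + Pq := by
      rw [← hsucc, ← Finset.sum_add_distrib]
      refine Finset.sum_congr rfl fun j _ => ?_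
      push_cast
      rw [add_smul, one_smul]
    rw [hWqd, hrhs] at h
    have hWSsum : Wq * Sq = ∑ j ∈ Finset.range d, (j : ℤ) • Wq ^ (j + 1) := by
      rw [hSqdef, Finset.mul_sum]
      refine Finset.sum_congr rfl fun j _ => ?_
      rw [mul_smul_comm, pow_succ']
    rw [← hSqdef] at h
    rw [hWSsum]
    exact eq_sub_of_add_eq h.symm
  have hLP : (1 - Wq) * Pq = 0 := by
    rw [sub_mul, one_mul, hWP, sub_self]
  have hLS : (1 - Wq) * Sq = Pq - (d : ℤ) • 1 := by
    rw [sub_mul, one_mul, hWS]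
    abel
  set Xq : Module.End ℚ (TensorProduct ℤ ℚ Λ) := ((d / m : ℕ) : ℤ) • Aq + Sq with hXqdef
  have hLX : (1 - Wq) * Xq = Pq := by
    rw [hXqdef, mul_add, mul_smul_comm, hLA, hLS]
    have hcast : ((d / m : ℕ) : ℤ) • ((m : ℚ) • (1 : Module.End ℚ (TensorProduct ℤ ℚ Λ)))
        = (d : ℤ) • (1 : Module.End ℚ (TensorProduct ℤ ℚ Λ)) := by
      rw [← Int.cast_smul_eq_zsmul ℚ, ← Int.cast_smul_eq_zsmul ℚ ((d : ℤ)), smul_smul]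
      congr 1
      have hdm : (d / m) * m = d := Nat.div_mul_cancel hmd
      exact_mod_cast congrArg (fun n : ℕ => (n : ℚ)) hdm
    rw [hcast]
    abel
  -- injectivity of 1 - Wq
  have hinj : Function.Injective ⇑(1 - Wq) := by
    rw [hWqdef]
    exact LinearMap.injective_iff_surjective.mpr (sub_baseChange_surjective w hell)
  have hXq0 : Xq = 0 := by
    have hL2X : (1 - Wq) * ((1 - Wq) * Xq) = 0 := by rw [hLX, hLP]
    apply LinearMap.ext
    intro v
    have h := congrArg (fun f : Module.End ℚ (TensorProduct ℤ ℚ Λ) => f v) hL2X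
    simp only [Module.End.mul_apply, LinearMap.zero_apply] at h
    have h2 : (1 - Wq) (Xq v) = 0 := by
      apply hinj
      rw [map_zero]
      exact h
    rw [LinearMap.zero_apply]
    apply hinj
    rw [map_zero]
    exact h2
  -- transfer to ℤ
  set φ : Module.End ℤ Λ →ₐ[ℤ] Module.End ℚ (TensorProduct ℤ ℚ Λ) :=
    Module.End.baseChangeHom ℤ ℚ Λ with hφdef
  have hφW : φ W = Wq := rfl
  set Az : Module.End ℤ Λ := Polynomial.aeval W M0 with hAzdef
  have hφA : φ Az = Aq := by
    rw [hAzdef, ← Polynomial.aeval_algHom_apply, hφW, hAqdef, ← algebraMap_int_eq,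
      Polynomial.aeval_map_algebraMap]
  set Xz : Module.End ℤ Λ := ((d / m : ℕ) : ℤ) • Az + ∑ j ∈ Finset.range d, (j : ℤ) • W ^ j
    with hXzdef
  have hφX : φ Xz = Xq := by
    rw [hXzdef, map_add, map_zsmul, hφA, map_sum, hXqdef]
    congr 1
    refine Finset.sum_congr rfl fun j _ => ?_
    rw [map_zsmul, map_pow, hφW]
  have hXz0 : ∀ x : Λ, Xz x = 0 := by
    intro x
    apply one_tmul_inj
    show (1 : ℚ) ⊗ₜ[ℤ] (Xz x) = (1 : ℚ) ⊗ₜ[ℤ] (0 : Λ)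
    rw [TensorProduct.tmul_zero]
    have hb : (φ Xz) ((1 : ℚ) ⊗ₜ[ℤ] x) = (1 : ℚ) ⊗ₜ[ℤ] (Xz x) := by
      rw [hφdef]
      exact LinearMap.baseChange_tmul (f := Xz) (1 : ℚ) x
    rw [← hb, hφX, hXq0, LinearMap.zero_apply]
  -- the scalar identity
  have hkey : ((d / m : ℕ) : ℤ) * (B α (Az β)) +
      ∑ j ∈ Finset.range d, (j : ℤ) * B α ((j • w) β) = 0 := by
    have h := hXz0 β
    rw [hXzdef] at h
    simp only [LinearMap.add_apply, LinearMap.smul_apply, LinearMap.sum_apply] at h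
    have h2 := congrArg (B α) h
    rw [map_add, map_zsmul, map_sum, map_zero] at h2
    rw [smul_eq_mul] at h2
    rw [← h2]
    congr 1
    refine Finset.sum_congr rfl fun j _ => ?_
    rw [map_zsmul, smul_eq_mul, hWdef, wLin_pow_apply]
  -- invariance of B under powers of w
  have hBW : ∀ (j : ℕ) (a b : Λ), B ((j • w) a) ((j • w) b) = B a b := by
    intro j
    induction j with
    | zero => intro a b; simp
    | succ n ih =>
        intro a b
        rw [succ_nsmul]
        simp only [AddAut.add_apply]
        rw [ih (w a) (w b), hwB]
  have hswap : ∀ j ∈ Finset.Ico 1 d, B ((j • w) α) β = B α (((d - j) • w) β) := by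
    intro j hj
    rw [Finset.mem_Ico] at hj
    have hjd : j + (d - j) = d := by omega
    have hβ : β = (j • w) (((d - j) • w) β) := by
      rw [← AddAut.add_apply, ← add_nsmul, hjd, hwd]; rfl
    conv_lhs => rw [hβ]
    exact hBW j α _
  have hreind : ∑ j ∈ Finset.Ico 1 d, (j : ℤ) * B ((j • w) α) β
      = ∑ i ∈ Finset.Ico 1 d, ((d : ℤ) - (i : ℤ)) * B α ((i • w) β) := by
    rw [Finset.sum_congr rfl fun j hj => by rw [hswap j hj]]
    refine Finset.sum_nbij' (fun j => d - j) (fun i => d - i) ?_ ?_ ?_ ?_ ?_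
    · intro a ha; simp only [Finset.mem_Ico] at ha ⊢; omega
    · intro a ha; simp only [Finset.mem_Ico] at ha ⊢; omega
    · intro a ha; simp only [Finset.mem_Ico] at ha; omega
    · intro a ha; simp only [Finset.mem_Ico] at ha; omega
    · intro a ha
      simp only [Finset.mem_Ico] at ha
      congr 1
      omega
  -- range sum equals Ico sum (the j = 0 term vanishes)
  have hrange : ∑ j ∈ Finset.range d, (j : ℤ) * B α ((j • w) β)
      = ∑ j ∈ Finset.Ico 1 d, (j : ℤ) * B α ((j • w) β) := by
    refine (Finset.sum_subset ?_ ?_).symm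
    · intro x hx
      simp only [Finset.mem_Ico] at hx
      simp only [Finset.mem_range]
      omega
    · intro x hx hnx
      simp only [Finset.mem_range] at hx
      simp only [Finset.mem_Ico] at hnx
      have : x = 0 := by omega
      subst this
      simp
  -- final arithmetic
  set e : ℤ := B α (Az β) with hedef
  set T : ℤ := ∑ i ∈ Finset.Ico 1 d, (B α ((i • w) β) : ℤ) with hTdef
  have hsum2 : ∑ i ∈ Finset.Ico 1 d, ((d : ℤ) - (i : ℤ)) * B α ((i • w) β)
      = (d : ℤ) * T + ((d / m : ℕ) : ℤ) * e := by
    have hexp : ∑ i ∈ Finset.Ico 1 d, ((d : ℤ) - (i : ℤ)) * B α ((i • w) β)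
        = (d : ℤ) * T - ∑ i ∈ Finset.Ico 1 d, (i : ℤ) * B α ((i • w) β) := by
      rw [hTdef, Finset.mul_sum, ← Finset.sum_sub_distrib]
      refine Finset.sum_congr rfl fun i _ => ?_
      ring
    rw [hexp, ← hrange]
    have : ∑ j ∈ Finset.range d, (j : ℤ) * B α ((j • w) β) = -(((d / m : ℕ) : ℤ) * e) := by
      rw [hedef] at hkey ⊢
      linarith [hkey]
    rw [this]
    ring
  rw [hreind, hsum2]
  -- now conclude with ζ
  have hL : (ζ ^ (d / m)) ^ e = ζ ^ (((d / m : ℕ) : ℤ) * e) := by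
    rw [← zpow_natCast ζ (d / m), ← zpow_mul]
  rw [hL]
  rw [add_comm, zpow_add₀ hζ0]
  have hT1 : ζ ^ ((d : ℤ) * T) = 1 := by
    rw [zpow_mul, hζ.zpow_eq_one, one_zpow]
  rw [hT1, mul_one]

end
end

section
/- Let A be a finite abelian group, C a cyclic group of order d, and b : A × A → C an alternating biadditive pairing (b(x, y+z) = b(x,y)b(x,z), b(x+y, z) = b(x,z)b(y,z), and b(x,x) = 1 for all x). Then there exists a central extension 1 → C → E → A → 1 whose commutator pairing equals b, i.e. for all x, y ∈ A and any lifts x̃, ỹ ∈ E one has x̃ỹx̃⁻¹ỹ⁻¹ = b(x,y). -/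
/-!
Write `b` additively as a biadditive alternating form `B`. A biadditive `F` is a normalized
2-cocycle, and in the extension `C × A` with multiplication `(a, s) (c, t) = (a c F(s, t), s + t)`
the commutator of lifts of `s, t` is `F(s, t) - F(t, s)`; so it suffices to find `F` with
`F - F.flip = B`. Decompose `A` into cyclic summands with projections `πᵢ` and take
`F(x, y) = ∑_{i < j} B(πᵢ x, πⱼ y)`: then `F(x, y) - F(y, x) = ∑_{i ≠ j} B(πᵢ x, πⱼ y)`, which is
`B(x, y)` because an alternating form vanishes on each cyclic summand.
-/

namespace AddMonoidHom

variable {A M : Type*} [AddCommGroup A] [AddCommGroup M]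

theorem apply_apply_eq_zero_of_isAddCyclic {Z : Type*} [AddGroup Z] [IsAddCyclic Z]
    (B : A →+ A →+ M) (hB : ∀ x, B x x = 0) (h : Z →+ A) (z w : Z) : B (h z) (h w) = 0 := by
  obtain ⟨g, hg⟩ := IsAddCyclic.exists_generator (α := Z)
  obtain ⟨k, rfl⟩ := AddSubgroup.mem_zmultiples_iff.1 (hg z)
  obtain ⟨l, rfl⟩ := AddSubgroup.mem_zmultiples_iff.1 (hg w)
  simp [hB]

theorem exists_sub_flip_eq_of_sum_eq_id {ι : Type*} [Fintype ι] [LinearOrder ι]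
    (B : A →+ A →+ M) (hB : ∀ x, B x x = 0) (π : ι → A →+ A) (hπ : ∀ x, ∑ i, π i x = x)
    (hdiag : ∀ i x y, B (π i x) (π i y) = 0) : ∃ F : A →+ A →+ M, F - F.flip = B := by
  have hanti : ∀ x y, B y x = -B x y := fun x y => by
    have := hB (x + y)
    simp only [map_add, add_apply, hB, zero_add, add_zero] at this
    exact eq_neg_of_add_eq_zero_left this
  refine ⟨∑ i, ∑ j, if i < j then (B.comp (π i)).compl₂ (π j) else 0, ?_⟩
  ext x y
  have hB_sum : B x y = ∑ i, ∑ j, B (π i x) (π j y) := by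
    conv_lhs => rw [← hπ x, ← hπ y]
    simp only [map_sum, finsetSum_apply]
    exact Finset.sum_comm
  rw [hB_sum, sub_apply, sub_apply, flip_apply]
  simp only [finsetSum_apply, apply_ite (fun F : A →+ A →+ M => F x y),
    apply_ite (fun F : A →+ A →+ M => F y x), compl₂_apply, comp_apply, zero_apply]
  rw [Finset.sum_comm (f := fun i j => if i < j then B (π i y) (π j x) else 0),
    ← Finset.sum_sub_distrib]
  refine Finset.sum_congr rfl fun i _ => ?_
  rw [← Finset.sum_sub_distrib]
  refine Finset.sum_congr rfl fun j _ => ?_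
  rcases lt_trichotomy i j with h | rfl | h
  · simp [h, h.not_gt]
  · simp [hdiag]
  · simp [h, h.not_gt, hanti (π i x)]

theorem exists_sub_flip_eq_of_finite [Finite A] (B : A →+ A →+ M) (hB : ∀ x, B x x = 0) :
    ∃ F : A →+ A →+ M, F - F.flip = B := by
  classical
  obtain ⟨ι, _, n, -, ⟨φ⟩⟩ := AddCommGroup.equiv_directSum_zmod_of_finite' A
  let : LinearOrder ι := LinearOrder.lift' _ (Fintype.equivFin ι).injective
  let incl (i : ι) : ZMod (n i) →+ A :=
    φ.symm.toAddMonoidHom.comp (DirectSum.of (fun i => ZMod (n i)) i)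
  refine B.exists_sub_flip_eq_of_sum_eq_id hB
    (fun i => (incl i).comp ((DFinsupp.evalAddMonoidHom i).comp φ.toAddMonoidHom))
    (fun x => ?_) (fun i _ _ => B.apply_apply_eq_zero_of_isAddCyclic hB (incl i) _ _)
  simp only [incl, coe_comp, Function.comp_apply, AddEquiv.coe_toAddMonoidHom, ← map_sum]
  exact φ.symm_apply_eq.2 (DirectSum.sum_univ_of (φ x))

end AddMonoidHom

structure NormalizedCocycle (A C : Type*) [AddGroup A] [CommGroup C] where
  toFun : A → A → C
  map_zero_left' : ∀ x, toFun 0 x = 1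
  cocycle' : ∀ x y z, toFun x y * toFun (x + y) z = toFun y z * toFun x (y + z)

namespace NormalizedCocycle

section

variable {A C : Type*} [AddGroup A] [CommGroup C] (f : NormalizedCocycle A C)

instance : CoeFun (NormalizedCocycle A C) fun _ => A → A → C := ⟨toFun⟩

theorem map_zero_left (x : A) : f 0 x = 1 := f.map_zero_left' x

theorem cocycle (x y z : A) : f x y * f (x + y) z = f y z * f x (y + z) := f.cocycle' x y z

theorem map_zero_right (x : A) : f x 0 = 1 := by
  simpa [map_zero_left] using f.cocycle x 0 0

@[ext]
structure Extension (f : NormalizedCocycle A C) where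
  central : C
  base : A

namespace Extension

variable {f}

instance : Mul f.Extension :=
  ⟨fun x y => ⟨x.central * y.central * f x.base y.base, x.base + y.base⟩⟩

instance : One f.Extension := ⟨⟨1, 0⟩⟩

instance : Inv f.Extension := ⟨fun x => ⟨(x.central * f (-x.base) x.base)⁻¹, -x.base⟩⟩

@[simp] theorem mul_central (x y : f.Extension) :
    (x * y).central = x.central * y.central * f x.base y.base := rfl

@[simp] theorem mul_base (x y : f.Extension) : (x * y).base = x.base + y.base := rfl

@[simp] theorem one_central : (1 : f.Extension).central = 1 := rfl

@[simp] theorem one_base : (1 : f.Extension).base = 0 := rfl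

@[simp] theorem inv_central (x : f.Extension) :
    x⁻¹.central = (x.central * f (-x.base) x.base)⁻¹ := rfl

@[simp] theorem inv_base (x : f.Extension) : x⁻¹.base = -x.base := rfl

instance : Group f.Extension :=
  Group.ofLeftAxioms
    (fun ⟨a, s⟩ ⟨c, t⟩ ⟨e, u⟩ => by
      ext
      · calc a * c * f s t * e * f (s + t) u = a * c * e * (f s t * f (s + t) u) := by ac_rfl
          _ = a * c * e * (f t u * f s (t + u)) := by rw [f.cocycle]
          _ = a * (c * e * f t u) * f s (t + u) := by ac_rfl
      · exact add_assoc s t u)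
    (fun x => by ext <;> simp [map_zero_left])
    (fun x => by ext <;> simp [mul_comm])

end Extension

def inl : C →* f.Extension where
  toFun c := ⟨c, 0⟩
  map_one' := rfl
  map_mul' c c' := by ext <;> simp [map_zero_right]

theorem inl_injective : Function.Injective f.inl := fun _ _ h => congrArg Extension.central h

theorem inl_mem_center (c : C) : f.inl c ∈ Subgroup.center f.Extension :=
  Subgroup.mem_center_iff.2 fun x => by ext <;> simp [inl, map_zero_left, map_zero_right, mul_comm]

theorem base_surjective : Function.Surjective (Extension.base (f := f)) := fun s => ⟨⟨1, s⟩, rfl⟩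

theorem base_eq_zero_iff (x : f.Extension) : x.base = 0 ↔ x ∈ f.inl.range :=
  ⟨fun h => ⟨x.central, Extension.ext rfl h.symm⟩, by rintro ⟨c, rfl⟩; rfl⟩

end

section Commutative

variable {A C : Type*} [AddCommGroup A] [CommGroup C]

theorem commutator_eq_inl (f : NormalizedCocycle A C) (x y : f.Extension) :
    x * y * x⁻¹ * y⁻¹ = f.inl (f x.base y.base / f y.base x.base) := by
  have hswap : x * y = f.inl (f x.base y.base / f y.base x.base) * (y * x) := by
    ext
    · simp [inl, map_zero_left, mul_comm, add_comm]
    · simp [inl, add_comm]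
  calc x * y * x⁻¹ * y⁻¹ = x * y * (y * x)⁻¹ := by group
    _ = _ := by rw [hswap, mul_inv_cancel_right]

def ofBiadditive (F : A →+ A →+ Additive C) : NormalizedCocycle A C where
  toFun x y := (F x y).toMul
  map_zero_left' x := by simp
  cocycle' x y z := by
    simp only [map_add, AddMonoidHom.add_apply, toMul_add, mul_comm, mul_left_comm]

theorem ofBiadditive_div_flip (F : A →+ A →+ Additive C) (x y : A) :
    ofBiadditive F x y / ofBiadditive F y x = ((F - F.flip) x y).toMul := rfl

end Commutative

end NormalizedCocycle

theorem exists_central_extension_with_commutator_pairing_general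
    (A : Type u) [AddCommGroup A] [Finite A]
    (C : Type v) [CommGroup C]
    (b : A → A → C)
    (hb₁ : ∀ x y z : A, b x (y + z) = b x y * b x z)
    (hb₂ : ∀ x y z : A, b (x + y) z = b x z * b y z)
    (halt : ∀ x : A, b x x = 1) :
    ∃ (E : Type (max u v)) (_ : Group E) (ι : C →* E) (p : E → A),
      Function.Injective ι ∧
      (∀ c : C, ι c ∈ Subgroup.center E) ∧
      (∀ x y : E, p (x * y) = p x + p y) ∧
      Function.Surjective p ∧
      (∀ e : E, p e = 0 ↔ e ∈ ι.range) ∧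
      (∀ x y : E, x * y * x⁻¹ * y⁻¹ = ι (b (p x) (p y))) := by
  let B : A →+ A →+ Additive C :=
    AddMonoidHom.mk' (fun x => AddMonoidHom.mk' (fun y => .ofMul (b x y)) (hb₁ x))
      fun x x' => AddMonoidHom.ext (hb₂ x x')
  obtain ⟨F, hF⟩ := B.exists_sub_flip_eq_of_finite halt
  let f := NormalizedCocycle.ofBiadditive F
  refine ⟨f.Extension, inferInstance, f.inl, NormalizedCocycle.Extension.base, f.inl_injective,
    f.inl_mem_center, fun _ _ => rfl, f.base_surjective, f.base_eq_zero_iff, fun x y => ?_⟩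
  rw [NormalizedCocycle.commutator_eq_inl, NormalizedCocycle.ofBiadditive_div_flip, hF]
  rfl

/-- **Existence of central extensions with prescribed commutator pairing.**
Let `A` be a finite abelian group, `C` a cyclic group of order `d`, and
`b : A × A → C` an alternating biadditive pairing.  Then there exists a central extension
`1 → C → E → A → 1` whose commutator pairing equals `b`: for all lifts `x̃, ỹ` of
`x, y ∈ A` one has `x̃ỹx̃⁻¹ỹ⁻¹ = b(x, y)`. -/
theorem exists_central_extension_with_commutator_pairing
    (A : Type u) [AddCommGroup A] [Finite A]
    (C : Type v) [CommGroup C] [IsCyclic C]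
    (d : ℕ) (hd : 0 < d) (hC : Nat.card C = d)
    (b : A → A → C)
    (hb₁ : ∀ x y z : A, b x (y + z) = b x y * b x z)
    (hb₂ : ∀ x y z : A, b (x + y) z = b x z * b y z)
    (halt : ∀ x : A, b x x = 1) :
    ∃ (E : Type (max u v)) (_ : Group E) (ι : C →* E) (p : E → A),
      Function.Injective ι ∧
      (∀ c : C, ι c ∈ Subgroup.center E) ∧
      (∀ x y : E, p (x * y) = p x + p y) ∧
      Function.Surjective p ∧
      (∀ e : E, p e = 0 ↔ e ∈ ι.range) ∧
      (∀ x y : E, x * y * x⁻¹ * y⁻¹ = ι (b (p x) (p y))) :=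
  exists_central_extension_with_commutator_pairing_general A C b hb₁ hb₂ halt
end

section
/- For all α, β ∈ Λ: ε_w(α,β)/ε_w(β,α) = (−1)^{(α,β)} · ⟨β,α⟩_w. -/
noncomputable section

/-- The pairing `ε_w(α,β) = ∏_{j=1}^{d-1} (1 - ζ^{-j})^{(w^jα,β)}`. -/
def epsw {k : Type*} [Field k] {Λ : Type*} [AddCommGroup Λ] (d : ℕ) (ζ : k)
    (B : Λ →+ Λ →+ ℤ) (w : AddAut Λ) (α β : Λ) : k :=
  ∏ j ∈ Finset.Ico 1 d, (1 - ζ ^ (-(j : ℤ))) ^ (B ((j • w) α) β)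

/-! Write `m j = (w^j α, β)`. Invariance and symmetry of the form give `(w^j β, α) = m (d - j)`,
so the reflection `j ↦ d - j` turns `ε_w(β, α)` into `∏ (1 - ζ^j)^(m j)`, and each factor of the
quotient becomes `(1 - ζ^{-j}) / (1 - ζ^j) = -ζ^{-j}`. Ellipticity kills the norm map
`∑_{j<d} w^j`: it factors through the finite group `Λ/(1-w)Λ` into the torsion-free `Λ`. Hence
`∑_{j=1}^{d-1} m j = -(α, β)`, and the same reflection together with `ζ^d = 1` matches the
exponents of `ζ`. -/

open Finset

theorem zpow_sum₀ {G₀ ι : Type*} [CommGroupWithZero G₀] {a : G₀} (ha : a ≠ 0) (s : Finset ι)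
    (f : ι → ℤ) : a ^ (∑ i ∈ s, f i) = ∏ i ∈ s, a ^ f i := by
  classical
  induction s using Finset.induction with
  | empty => simp
  | insert i s hi ih => rw [sum_insert hi, prod_insert hi, zpow_add₀ ha, ih]

theorem Finset.prod_Ico_one_reflect {M : Type*} [CommMonoid M] (f : ℕ → M) (d : ℕ) :
    ∏ j ∈ Ico 1 d, f (d - j) = ∏ j ∈ Ico 1 d, f j := by
  simpa using prod_Ico_reflect f 1 (Nat.le_succ d)

theorem Finset.sum_Ico_one_reflect {M : Type*} [AddCommMonoid M] (f : ℕ → M) (d : ℕ) :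
    ∑ j ∈ Ico 1 d, f (d - j) = ∑ j ∈ Ico 1 d, f j := by
  simpa using sum_Ico_reflect f 1 (Nat.le_succ d)

theorem one_sub_inv_div_one_sub {K : Type*} [Field K] {a : K} (h0 : a ≠ 0) (h1 : a ≠ 1) :
    (1 - a⁻¹) / (1 - a) = -a⁻¹ := by
  have : 1 - a ≠ 0 := sub_ne_zero.2 h1.symm
  field_simp
  ring

namespace IsPrimitiveRoot

variable {K : Type*} [Field K] {ζ : K} {d : ℕ}

theorem prod_one_sub_zpow_neg_reflect (hζ : IsPrimitiveRoot ζ d) (m : ℕ → ℤ) :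
    ∏ j ∈ Ico 1 d, (1 - ζ ^ (-(j : ℤ))) ^ m (d - j) = ∏ j ∈ Ico 1 d, (1 - ζ ^ (j : ℤ)) ^ m j := by
  let f : ℕ → K := fun i => (1 - ζ ^ ((i : ℤ) - d)) ^ m i
  calc ∏ j ∈ Ico 1 d, (1 - ζ ^ (-(j : ℤ))) ^ m (d - j)
      = ∏ j ∈ Ico 1 d, f (d - j) := prod_congr rfl fun j hj => by
        dsimp only [f]
        rw [Nat.cast_sub (mem_Ico.1 hj).2.le, sub_sub_cancel_left]
    _ = ∏ j ∈ Ico 1 d, f j := prod_Ico_one_reflect f d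
    _ = ∏ j ∈ Ico 1 d, (1 - ζ ^ (j : ℤ)) ^ m j := prod_congr rfl fun j hj => by
        have hd : d ≠ 0 := by grind
        dsimp only [f]
        rw [zpow_sub₀ (hζ.ne_zero hd), zpow_natCast ζ d, hζ.pow_eq_one, div_one]

theorem prod_one_sub_zpow_neg_div_reflect (hζ : IsPrimitiveRoot ζ d) (m : ℕ → ℤ) :
    (∏ j ∈ Ico 1 d, (1 - ζ ^ (-(j : ℤ))) ^ m j) /
        ∏ j ∈ Ico 1 d, (1 - ζ ^ (-(j : ℤ))) ^ m (d - j) =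
      (-1) ^ (∑ j ∈ Ico 1 d, m j) * ζ ^ (∑ j ∈ Ico 1 d, (j : ℤ) * m (d - j)) := by
  rcases Nat.eq_zero_or_pos d with rfl | hd
  · simp
  have h0 : ζ ≠ 0 := hζ.ne_zero hd.ne'
  have hζj : ∀ j ∈ Ico 1 d, ζ ^ (j : ℤ) ≠ 1 := fun j hj => by
    rw [zpow_natCast]
    exact hζ.pow_ne_one_of_pos_of_lt (Nat.one_le_iff_ne_zero.1 (mem_Ico.1 hj).1) (mem_Ico.1 hj).2
  have hexp : ∑ j ∈ Ico 1 d, (j : ℤ) * m (d - j) =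
      d * ∑ j ∈ Ico 1 d, m j + ∑ j ∈ Ico 1 d, -(j : ℤ) * m j := by
    let g : ℕ → ℤ := fun i => (d - i) * m i
    calc ∑ j ∈ Ico 1 d, (j : ℤ) * m (d - j)
        = ∑ j ∈ Ico 1 d, g (d - j) := sum_congr rfl fun j hj => by
          dsimp only [g]
          rw [Nat.cast_sub (mem_Ico.1 hj).2.le, sub_sub_cancel]
      _ = ∑ j ∈ Ico 1 d, g j := sum_Ico_one_reflect g d
      _ = _ := by rw [mul_sum, ← sum_add_distrib]; exact sum_congr rfl fun j _ => by ring
  calc (∏ j ∈ Ico 1 d, (1 - ζ ^ (-(j : ℤ))) ^ m j) /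
        ∏ j ∈ Ico 1 d, (1 - ζ ^ (-(j : ℤ))) ^ m (d - j)
      = (∏ j ∈ Ico 1 d, (1 - ζ ^ (-(j : ℤ))) ^ m j) /
        ∏ j ∈ Ico 1 d, (1 - ζ ^ (j : ℤ)) ^ m j := by rw [hζ.prod_one_sub_zpow_neg_reflect]
    _ = ∏ j ∈ Ico 1 d, ((-1) ^ m j * ζ ^ (-(j : ℤ) * m j)) := by
      rw [← prod_div_distrib]
      refine prod_congr rfl fun j hj => ?_
      rw [← div_zpow, zpow_neg, one_sub_inv_div_one_sub (zpow_ne_zero _ h0) (hζj j hj),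
        neg_eq_neg_one_mul, mul_zpow, ← zpow_neg, ← zpow_mul]
    _ = (-1) ^ (∑ j ∈ Ico 1 d, m j) * ζ ^ (∑ j ∈ Ico 1 d, -(j : ℤ) * m j) := by
      rw [prod_mul_distrib, zpow_sum₀ (neg_ne_zero.2 one_ne_zero), zpow_sum₀ h0]
    _ = _ := by
      rw [hexp, zpow_add₀ h0, zpow_mul, zpow_natCast, hζ.pow_eq_one, one_zpow, one_mul]

end IsPrimitiveRoot

namespace AddAut

variable {Λ : Type*} [AddCommGroup Λ] (w : AddAut Λ) (d : ℕ)

def orbitSum : Λ →+ Λ := ∑ j ∈ range d, (j • w).toAddMonoidHom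

theorem orbitSum_apply (x : Λ) : w.orbitSum d x = ∑ j ∈ range d, (j • w) x := by
  simp [orbitSum]

variable {w d}

theorem orbitSum_sub_apply_self (hw : d • w = 0) (x : Λ) : w.orbitSum d (x - w x) = 0 := by
  have step : ∀ j : ℕ, (j • w) (x - w x) = (j • w) x - ((j + 1) • w) x := fun j => by
    rw [map_sub, succ_nsmul, add_apply]
  rw [orbitSum_apply, sum_congr rfl fun j _ => step j, sum_range_sub', hw, zero_nsmul, sub_self]

theorem coinvSub_le_ker_orbitSum (hw : d • w = 0) : coinvSub w ≤ (w.orbitSum d).ker := by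
  rw [coinvSub, AddSubgroup.closure_le]
  rintro _ ⟨x, rfl⟩
  exact orbitSum_sub_apply_self hw x

theorem orbitSum_eq_zero [IsAddTorsionFree Λ] [Finite (Λ ⧸ coinvSub w)] (hw : d • w = 0)
    (x : Λ) : w.orbitSum d x = 0 := by
  let φ := QuotientAddGroup.lift _ (w.orbitSum d) (coinvSub_le_ker_orbitSum hw)
  have hfin : IsOfFinAddOrder (φ x) := φ.isOfFinAddOrder (isOfFinAddOrder_of_finite _)
  exact (isOfFinAddOrder_iff_eq_zero _).1 hfin

end AddAut

section Pairing

variable {Λ : Type*} [AddCommGroup Λ] (B : Λ →+ Λ →+ ℤ) {w : AddAut Λ} {d : ℕ}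

theorem pairing_nsmul_apply_nsmul_apply (hwB : ∀ a b : Λ, B (w a) (w b) = B a b) (n : ℕ)
    (a b : Λ) : B ((n • w) a) ((n • w) b) = B a b := by
  induction n generalizing a b with
  | zero => rfl
  | succ n ih => rw [succ_nsmul, AddAut.add_apply, AddAut.add_apply, ih, hwB]

theorem pairing_nsmul_apply_swap (hBsymm : ∀ a b : Λ, B a b = B b a)
    (hwB : ∀ a b : Λ, B (w a) (w b) = B a b) (hw : d • w = 0) {j : ℕ} (hj : j ≤ d) (α β : Λ) :
    B ((j • w) β) α = B (((d - j) • w) α) β := by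
  have hα : (j • w) (((d - j) • w) α) = α := by
    rw [← AddAut.add_apply, ← add_nsmul, Nat.add_sub_cancel' hj, hw, AddAut.zero_apply]
  calc B ((j • w) β) α = B ((j • w) β) ((j • w) (((d - j) • w) α)) := by rw [hα]
    _ = B β (((d - j) • w) α) := pairing_nsmul_apply_nsmul_apply B hwB j _ _
    _ = B (((d - j) • w) α) β := hBsymm _ _

theorem sum_Ico_one_pairing_nsmul_apply [IsAddTorsionFree Λ] [Finite (Λ ⧸ coinvSub w)]
    (hd : 0 < d) (hw : d • w = 0) (α β : Λ) : ∑ j ∈ Ico 1 d, B ((j • w) α) β = -B α β := by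
  have h := congrArg (B · β) (w.orbitSum_eq_zero hw α)
  simp only [AddAut.orbitSum_apply, map_sum, AddMonoidHom.finsetSum_apply, map_zero,
    AddMonoidHom.zero_apply] at h
  rw [range_eq_Ico, sum_eq_sum_Ico_succ_bot hd, zero_smul, AddAut.zero_apply] at h
  linarith

end Pairing

theorem epsw_skew_symmetry_general
    (k : Type*) [Field k]
    (d : ℕ) (hd : 0 < d) (ζ : k) (hζ : IsPrimitiveRoot ζ d)
    (Λ : Type*) [AddCommGroup Λ] [Module.Free ℤ Λ]
    (B : Λ →+ Λ →+ ℤ)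
    (hBsymm : ∀ a b : Λ, B a b = B b a)
    (w : AddAut Λ) (hwB : ∀ a b : Λ, B (w a) (w b) = B a b)
    (hword : addOrderOf w = d)
    (hell : Finite (Λ ⧸ coinvSub w)) :
    ∀ α β : Λ,
      epsw d ζ B w α β / epsw d ζ B w β α =
        (-1 : k) ^ (B α β) * ζ ^ (∑ j ∈ Finset.Ico 1 d, (j : ℤ) * B ((j • w) β) α) := by
  intro α β
  have : IsAddTorsionFree Λ := .of_isTorsionFree ℤ Λ
  have hw : d • w = 0 := hword ▸ addOrderOf_nsmul_eq_zero w
  have hswap : ∀ j ∈ Ico 1 d, B ((j • w) β) α = B (((d - j) • w) α) β := fun j hj =>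
    pairing_nsmul_apply_swap B hBsymm hwB hw (mem_Ico.1 hj).2.le α β
  have hε : epsw d ζ B w β α =
      ∏ j ∈ Ico 1 d, (1 - ζ ^ (-(j : ℤ))) ^ B (((d - j) • w) α) β :=
    prod_congr rfl fun j hj => by rw [hswap j hj]
  rw [hε, sum_congr rfl fun j hj => by rw [hswap j hj], epsw,
    hζ.prod_one_sub_zpow_neg_div_reflect fun j => B ((j • w) α) β, sum_Ico_one_pairing_nsmul_apply B hd hw,
    ← inv_zpow', inv_neg_one]

/-- **Lemma 2.10.** `ε_w(α,β)/ε_w(β,α) = (−1)^{(α,β)} ⟨β,α⟩_w` for all `α, β ∈ Λ`,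
where `⟨β,α⟩_w = ζ^{∑_{j=1}^{d-1} j·(w^jβ,α)}`. -/
theorem epsw_skew_symmetry
    (k : Type*) [Field k] [CharZero k]
    (d : ℕ) (hd : 0 < d) (ζ : k) (hζ : IsPrimitiveRoot ζ d)
    (Λ : Type*) [AddCommGroup Λ] [Module.Free ℤ Λ] [Module.Finite ℤ Λ]
    (B : Λ →+ Λ →+ ℤ)
    (hBsymm : ∀ a b : Λ, B a b = B b a)
    (hBpos : ∀ a : Λ, a ≠ 0 → 0 < B a a)
    (hBgen : AddSubgroup.closure {a : Λ | B a a = 2} = ⊤)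
    (w : AddAut Λ) (hwB : ∀ a b : Λ, B (w a) (w b) = B a b)
    (hword : addOrderOf w = d)
    (hell : Finite (Λ ⧸ coinvSub w)) :
    ∀ α β : Λ,
      epsw d ζ B w α β / epsw d ζ B w β α =
        (-1 : k) ^ (B α β) * ζ ^ (∑ j ∈ Finset.Ico 1 d, (j : ℤ) * B ((j • w) β) α) :=
  epsw_skew_symmetry_general k d hd ζ hζ Λ B hBsymm w hwB hword hell

end
end

section
/- Suppose d is odd and ⟨·,·⟩ : Λ_w × Λ_w → ⟨ζ⟩ is an alternating biadditive pairing, pulled back to Λ × Λ via the projection Λ → Λ_w. Define ε : Λ × Λ → k^× by ε(α,β) = (−1)^{(α, Σ_{j=1}^{(d−1)/2} w^jβ)} · ⟨α,β⟩^{(d−1)/2}. Then ε is biadditive and satisfies: (1) ε(α,β)/ε(β,α) = −⟨β,α⟩ whenever α, β ∈ Φ with (α,β) = −1; and (2) ε(wα, wβ) = ε(α,β) for all α, β ∈ Λ. (In particular, if ℋ is any central extension of Λ_w by ⟨ζ⟩ with commutator pairing ⟨·,·⟩, then (Λ, w, ℋ, ε) is an input datum.) -/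
noncomputable section

/-- Any element of `coinvSub w` is of the form `z - w z`. -/
theorem coinvSub_mem_iff {Λ : Type*} [AddCommGroup Λ] (w : AddAut Λ) (u : Λ)
    (hu : u ∈ coinvSub w) : ∃ z : Λ, u = z - w z := by
  set φ : Λ →+ Λ := (AddMonoidHom.id Λ) - (w : Λ ≃+ Λ).toAddMonoidHom with hφ
  have hset : {y | ∃ x : Λ, y = x - w x} = (φ.range : Set Λ) := by
    ext y
    simp [hφ, AddMonoidHom.sub_apply, eq_comm]
  rw [coinvSub, hset, AddSubgroup.closure_eq] at hu
  obtain ⟨z, hz⟩ := hu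
  exact ⟨z, by simp [← hz, hφ, AddMonoidHom.sub_apply]⟩

/-- **Remark 2.11.** Suppose `d` is odd and `⟨·,·⟩` is an alternating biadditive pairing on
`Λ_w` (pulled back to `Λ`), valued in `⟨ζ⟩`.  Then
`ε(α,β) := (−1)^{(α, ∑_{j=1}^{(d−1)/2} w^jβ)} ⟨α,β⟩^{(d−1)/2}` is biadditive and satisfies
the two conditions in the definition of an input datum. -/
theorem input_datum_from_arbitrary_alternating_pairing
    (k : Type*) [Field k] [CharZero k]
    (d : ℕ) (hd : 0 < d) (hodd : Odd d) (ζ : k) (hζ : IsPrimitiveRoot ζ d)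
    (Λ : Type*) [AddCommGroup Λ] [Module.Free ℤ Λ] [Module.Finite ℤ Λ]
    (B : Λ →+ Λ →+ ℤ)
    (hBsymm : ∀ a b : Λ, B a b = B b a)
    (hBpos : ∀ a : Λ, a ≠ 0 → 0 < B a a)
    (hBgen : AddSubgroup.closure {a : Λ | B a a = 2} = ⊤)
    (w : AddAut Λ) (hwB : ∀ a b : Λ, B (w a) (w b) = B a b)
    (hword : addOrderOf w = d)
    (hell : Finite (Λ ⧸ coinvSub w))
    -- the alternating biadditive pairing on Λ_w, pulled back to Λ, valued in ⟨ζ⟩ ⊆ k^×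
    (P : Λ → Λ → kˣ)
    (hPζ : ∀ a b : Λ, ∃ i : ℕ, (P a b : k) = ζ ^ i)
    (hPadd₁ : ∀ a b c : Λ, P (a + b) c = P a c * P b c)
    (hPadd₂ : ∀ a b c : Λ, P a (b + c) = P a b * P a c)
    (hPalt : ∀ a : Λ, P a a = 1)
    (hPfac₁ : ∀ a a' c : Λ, a - a' ∈ coinvSub w → P a c = P a' c)
    (hPfac₂ : ∀ a c c' : Λ, c - c' ∈ coinvSub w → P a c = P a c') :
    -- ε(α,β) = (−1)^{(α, ∑_{j=1}^{(d−1)/2} w^jβ)} · ⟨α,β⟩^{(d−1)/2}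
    let ε : Λ → Λ → k := fun α β =>
      (-1 : k) ^ (B α (∑ j ∈ Finset.Icc 1 ((d - 1) / 2), (j • w) β)) *
        (P α β : k) ^ ((d - 1) / 2)
    -- ε is biadditive
    (∀ a b c : Λ, ε (a + b) c = ε a c * ε b c) ∧
    (∀ a b c : Λ, ε a (b + c) = ε a b * ε a c) ∧
    -- (1): ε(α,β)/ε(β,α) = −⟨β,α⟩ whenever α, β ∈ Φ with (α,β) = −1
    (∀ α β : Λ, B α α = 2 → B β β = 2 → B α β = -1 →
      ε α β / ε β α = -(P β α : k)) ∧
    -- (2): ε(wα, wβ) = ε(α,β)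
    (∀ α β : Λ, ε (w α) (w β) = ε α β) := by
  intro ε
  obtain ⟨m, hm⟩ : ∃ m : ℕ, d = 2 * m + 1 := by
    obtain ⟨r, hr⟩ := hodd; exact ⟨r, by omega⟩
  have hm2 : (d - 1) / 2 = m := by omega
  have hone : (-1 : k) ≠ 0 := by norm_num
  -- powers of w preserve B
  have hw_pow : ∀ (n : ℕ) (a b : Λ), B ((n • w) a) ((n • w) b) = B a b := by
    intro n
    induction n with
    | zero => intro a b; simp
    | succ n ih =>
      intro a b
      rw [succ_nsmul', AddAut.add_apply, AddAut.add_apply, hwB, ih]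
  have hwd : d • w = 0 := by rw [← hword]; exact addOrderOf_nsmul_eq_zero w
  -- the norm element kills Λ
  have hNzero : ∀ β : Λ, ∑ j ∈ Finset.range d, (j • w) β = 0 := by
    intro β
    set x : Λ := ∑ j ∈ Finset.range d, (j • w) β with hx
    have hfix : w x = x := by
      rw [hx, map_sum]
      have h1 : ∀ j : ℕ, w ((j • w) β) = ((j + 1) • w) β := by
        intro j; rw [succ_nsmul', AddAut.add_apply]
      rw [Finset.sum_congr rfl fun j _ => h1 j]
      have h2 := Finset.sum_range_succ (fun j => (j • w) β) d
      have h3 := Finset.sum_range_succ' (fun j => (j • w) β) d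
      have h4 : (d • w) β = (0 • w) β := by rw [hwd, zero_nsmul]
      rw [h3, h4] at h2
      exact add_right_cancel h2
    obtain ⟨n, hn, hmem⟩ : ∃ n : ℕ, 0 < n ∧ n • x ∈ coinvSub w := by
      obtain ⟨n, hn, h⟩ := (isOfFinAddOrder_of_finite
        ((QuotientAddGroup.mk x) : Λ ⧸ coinvSub w)).exists_nsmul_eq_zero
      refine ⟨n, hn, ?_⟩
      rwa [← QuotientAddGroup.mk_nsmul, QuotientAddGroup.eq_zero_iff] at h
    obtain ⟨z, hz⟩ := coinvSub_mem_iff w _ hmem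
    have hBx : B (n • x) x = 0 := by
      rw [hz, map_sub, AddMonoidHom.sub_apply]
      have : B (w z) x = B z x := by
        conv_lhs => rw [← hfix]
        exact hwB z x
      rw [this, sub_self]
    rw [map_nsmul, AddMonoidHom.nsmul_apply, nsmul_eq_mul] at hBx
    have hBxx : B x x = 0 := by
      have : (n : ℤ) ≠ 0 := by exact_mod_cast hn.ne'
      exact (mul_eq_zero.mp hBx).resolve_left this
    by_contra hx0
    exact absurd hBxx (hBpos x hx0).ne'
  -- sum over Icc 1 (2m) is -β
  have hSfull : ∀ β : Λ, ∑ j ∈ Finset.Icc 1 (2 * m), (j • w) β = -β := by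
    intro β
    have h0 := hNzero β
    rw [hm, show Finset.range (2*m+1) = insert 0 (Finset.Icc 1 (2*m)) by
      ext x; simp; omega, Finset.sum_insert (by simp)] at h0
    simp only [zero_nsmul] at h0
    have : (0 : AddAut Λ) β = β := rfl
    rw [this] at h0
    exact eq_neg_of_add_eq_zero_right h0
  -- key parity identity
  have hkey : ∀ α β : Λ, B α (∑ j ∈ Finset.Icc 1 m, (j • w) β)
      + B β (∑ j ∈ Finset.Icc 1 m, (j • w) α) = - B α β := by
    intro α β
    have hterm : ∀ j ∈ Finset.Icc 1 m, B β ((j • w) α) = B α (((d - j) • w) β) := by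
      intro j hj
      simp only [Finset.mem_Icc] at hj
      have hdj : ((d - j) • w) ((j • w) α) = α := by
        rw [← AddAut.add_apply, ← add_nsmul, Nat.sub_add_cancel (by omega : j ≤ d), hwd]
        rfl
      rw [← hw_pow (d - j) β ((j • w) α), hdj, hBsymm]
    have hsum2 : B β (∑ j ∈ Finset.Icc 1 m, (j • w) α)
        = ∑ j ∈ Finset.Icc (m+1) (2*m), B α ((j • w) β) := by
      rw [map_sum, Finset.sum_congr rfl hterm]
      have : ∀ j ∈ Finset.Icc 1 m, B α (((d - j) • w) β) = B α (((2*m+1 - j) • w) β) := by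
        intro j hj; rw [hm]
      rw [Finset.sum_congr rfl this]
      refine Finset.sum_nbij' (fun j => 2*m+1-j) (fun j => 2*m+1-j) ?_ ?_ ?_ ?_ ?_ <;>
        intro a ha <;> simp only [Finset.mem_Icc] at * <;> try beta_reduce
      all_goals first | omega | (congr 2; omega)
    have hsum1 : B α (∑ j ∈ Finset.Icc 1 m, (j • w) β)
        = ∑ j ∈ Finset.Icc 1 m, B α ((j • w) β) := map_sum (B α) _ _
    have hsplit : ∑ j ∈ Finset.Icc 1 (2*m), B α ((j • w) β)
        = ∑ j ∈ Finset.Icc 1 m, B α ((j • w) β)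
          + ∑ j ∈ Finset.Icc (m+1) (2*m), B α ((j • w) β) := by
      have hIoc : ∀ a b : ℕ, Finset.Icc (a+1) b = Finset.Ioc a b := by
        intro a b; ext x; simp [Nat.succ_le_iff]
      rw [show (1:ℕ) = 0 + 1 from rfl, hIoc, hIoc, hIoc,
        Finset.sum_Ioc_consecutive _ (by omega : 0 ≤ m) (by omega : m ≤ 2*m)]
    rw [hsum1, hsum2, ← hsplit, ← map_sum (B α), hSfull, map_neg]
  -- ε(wα, wβ) = ε(α, β) ingredients
  have hwmem : ∀ a : Λ, w a - a ∈ coinvSub w := by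
    intro a
    have : a - w a ∈ coinvSub w := AddSubgroup.subset_closure ⟨a, rfl⟩
    have h2 := AddSubgroup.neg_mem _ this
    rwa [neg_sub] at h2
  have hPw : ∀ a b : Λ, P (w a) (w b) = P a b := by
    intro a b
    rw [hPfac₁ (w a) a (w b) (hwmem a), hPfac₂ a (w b) b (hwmem b)]
  -- P is skew
  have hPskew : ∀ a b : Λ, P a b * P b a = 1 := by
    intro a b
    have h := hPalt (a + b)
    rw [hPadd₁, hPadd₂, hPadd₂, hPalt, hPalt, one_mul, mul_one] at h
    exact h
  -- P has values that are d-th roots of unity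
  have hPd : ∀ a b : Λ, (P a b : k) ^ d = 1 := by
    intro a b
    obtain ⟨i, hi⟩ := hPζ a b
    rw [hi, ← pow_mul, mul_comm i d, pow_mul, hζ.pow_eq_one, one_pow]
  refine ⟨?_, ?_, ?_, ?_⟩
  · -- additivity in the first variable
    intro a b c
    show (-1 : k) ^ (B (a+b) _) * (P (a+b) c : k) ^ _
        = ((-1 : k) ^ (B a _) * (P a c : k) ^ _) * ((-1 : k) ^ (B b _) * (P b c : k) ^ _)
    rw [map_add, AddMonoidHom.add_apply, zpow_add₀ hone, hPadd₁, Units.val_mul, mul_pow]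
    ring
  · -- additivity in the second variable
    intro a b c
    show (-1 : k) ^ (B a (∑ j ∈ Finset.Icc 1 ((d-1)/2), (j • w) (b + c))) * (P a (b+c) : k) ^ _
        = ((-1 : k) ^ (B a _) * (P a b : k) ^ _) * ((-1 : k) ^ (B a _) * (P a c : k) ^ _)
    have hsplit : ∑ j ∈ Finset.Icc 1 ((d-1)/2), (j • w) (b + c)
        = (∑ j ∈ Finset.Icc 1 ((d-1)/2), (j • w) b) + ∑ j ∈ Finset.Icc 1 ((d-1)/2), (j • w) c := by
      rw [← Finset.sum_add_distrib]
      exact Finset.sum_congr rfl fun j _ => map_add _ b c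
    rw [hsplit, map_add, zpow_add₀ hone, hPadd₂, Units.val_mul, mul_pow]
    ring
  · -- condition (1)
    intro α β hα hβ hαβ
    show ((-1 : k) ^ (B α _) * (P α β : k) ^ _) / ((-1 : k) ^ (B β _) * (P β α : k) ^ _)
        = -(P β α : k)
    rw [hm2]
    set a : ℤ := B α (∑ j ∈ Finset.Icc 1 m, (j • w) β) with ha
    set b : ℤ := B β (∑ j ∈ Finset.Icc 1 m, (j • w) α) with hb
    have hab : a + b = 1 := by
      have := hkey α β
      rw [← ha, ← hb, hαβ] at this
      omega
    set p : k := (P α β : k) with hp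
    set q : k := (P β α : k) with hq
    have hp0 : p ≠ 0 := Units.ne_zero _
    have hq0 : q ≠ 0 := Units.ne_zero _
    have hpq : p * q = 1 := by
      rw [hp, hq, ← Units.val_mul, hPskew, Units.val_one]
    have hpd : p ^ d = 1 := hPd α β
    -- q = p^(2m)
    have hq2m : p ^ (2 * m) = q := by
      have h1 : p ^ (2 * m) * p = q * p := by
        rw [← pow_succ, ← hm, hpd, mul_comm q p, hpq]
      exact mul_right_cancel₀ hp0 h1
    have hfrac : p ^ m / q ^ m = q := by
      have hqinv : q = p⁻¹ := eq_inv_of_mul_eq_one_right hpq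
      rw [← div_pow, hqinv, div_eq_mul_inv, inv_inv, ← sq, ← pow_mul, hq2m, ← hqinv]
    have hsign : (-1 : k) ^ a / (-1 : k) ^ b = -1 := by
      have hbinv : ((-1 : k) ^ b)⁻¹ = (-1 : k) ^ b := by
        refine inv_eq_of_mul_eq_one_right ?_
        rw [← zpow_add₀ hone]
        rw [show b + b = 2 * b by ring, zpow_mul]
        norm_num
      rw [div_eq_mul_inv, hbinv, ← zpow_add₀ hone, hab, zpow_one]
    rw [mul_div_mul_comm, hsign, hfrac, neg_one_mul]
  · -- condition (2)
    intro α β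
    show (-1 : k) ^ (B (w α) (∑ j ∈ Finset.Icc 1 ((d-1)/2), (j • w) (w β))) * (P (w α) (w β) : k) ^ _
        = (-1 : k) ^ (B α _) * (P α β : k) ^ _
    have hcomm : ∀ j : ℕ, (j • w) (w β) = w ((j • w) β) := by
      intro j
      rw [← AddAut.add_apply, ← AddAut.add_apply, ← succ_nsmul, ← succ_nsmul']
    have hsum : ∑ j ∈ Finset.Icc 1 ((d-1)/2), (j • w) (w β)
        = w (∑ j ∈ Finset.Icc 1 ((d-1)/2), (j • w) β) := by
      rw [map_sum]
      exact Finset.sum_congr rfl fun j _ => hcomm j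
    rw [hsum, hwB, hPw]

end
end

section
/- For α̃ ∈ Φ̃ set Z_{α̃} := X_{α̃} + X_{wα̃} + ... + X_{w^{d−1}α̃} ∈ 𝔥. Then for all α̃, β̃ ∈ Φ̃: [Z_{α̃}, Z_{β̃}] = Σ_{j ∈ I_{α,β}(−1)} ε_w(w^jα, β) · Z_{(w^jα̃)β̃}, where I_{α,β}(−1) := {j ∈ {0, ..., d−1} | (w^jα, β) = −1} (note that for j ∈ I_{α,β}(−1) one has w^jα + β ∈ Φ, so (w^jα̃)β̃ ∈ Φ̃). -/
/-!
Expanding bilinearly and reindexing by the shift `s` (possible since `w̃ ^ d = 1`),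
`[Z_α̃, Z_β̃] = ∑_s ∑_j [X_{w^j(w^s α̃)}, X_{w^j β̃}]`. Since `w` preserves `(·,·)` and `ε_w`,
the `d` terms of a fixed shift all have the same type, governed by `c = (w^s α, β)`:
if `c = -1` they are `ε_w(w^s α, β) X_{w^j((w^s α̃) β̃)}` and add up to
`ε_w(w^s α, β) Z_{(w^s α̃) β̃}`;
if `c = -2`, then `w^s α = -β` and they are multiples of the coroots `(w^j w^s α)∨`, whose
sum over the orbit vanishes because a `w`-invariant functional `Λ → ℤ` kills `(1 - w)Λ`,
a subgroup of finite index; for any other `c` the vector `w^{s+j} α + w^j β` is neither `0` nor a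
root and the terms vanish.
-/

noncomputable section

/-- The exponent `∑_{j=1}^{d-1} j·(w^jα, β)`, so that `⟨α,β⟩_w = ζ ^ commExpW d B w α β`. -/
def commExpW {Λ : Type*} [AddCommGroup Λ] (d : ℕ) (B : Λ →+ Λ →+ ℤ) (w : AddAut Λ)
    (α β : Λ) : ℤ :=
  ∑ j ∈ Finset.Ico 1 d, (j : ℤ) * B ((j • w) α) β

/-- `Z_{α̃} = X_{α̃} + X_{wα̃} + ... + X_{w^{d-1}α̃}`. -/
def Zsum {Lt H : Type*} [Monoid Lt] [AddCommMonoid H] (d : ℕ) (wt : MulAut Lt)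
    (X : Lt → H) (a : Lt) : H :=
  ∑ j ∈ Finset.range d, X ((wt ^ j) a)

open Finset

theorem Function.Periodic.sum_range_add {M : Type*} [AddCommMonoid M] {p : ℕ → M} {d : ℕ}
    (hp : Function.Periodic p d) (j : ℕ) :
    ∑ i ∈ range d, p (j + i) = ∑ i ∈ range d, p i := by
  have hIco := sum_Ico_eq_sum_range p j (j + d)
  rw [Nat.add_sub_cancel_left] at hIco
  have hmod := congrArg (fun s => (s.map p).sum) (Nat.multiset_Ico_map_mod j d)
  simp only [Multiset.map_map, Function.comp_def, hp.map_mod_nat] at hmod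
  rw [← hIco]
  exact hmod

section LatticeAutomorphism

variable {Λ : Type*} [AddCommGroup Λ] {w : AddAut Λ}

theorem coinvSub_le_ker {M : Type*} [AddCommGroup M] {F : Λ →+ M} (hF : ∀ x, F (w x) = F x) :
    coinvSub w ≤ F.ker := by
  rw [coinvSub, AddSubgroup.closure_le]
  rintro _ ⟨x, rfl⟩
  simp [hF]

theorem eq_zero_of_invariant_of_finite_coinv [Finite (Λ ⧸ coinvSub w)] {F : Λ →+ ℤ}
    (hF : ∀ x, F (w x) = F x) : F = 0 := by
  ext x
  have hx : F ((coinvSub w).index • x) = 0 := coinvSub_le_ker hF ((coinvSub w).nsmul_index_mem x)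
  rw [map_nsmul, smul_eq_zero] at hx
  exact hx.resolve_left AddSubgroup.index_ne_zero_of_finite

variable {B : Λ →+ Λ →+ ℤ}

theorem pairing_nsmul_apply (hwB : ∀ a b, B (w a) (w b) = B a b) (n : ℕ) (x y : Λ) :
    B ((n • w) x) ((n • w) y) = B x y := by
  induction n with
  | zero => rfl
  | succ n ih => rw [succ_nsmul', AddAut.add_apply, AddAut.add_apply, hwB, ih]

theorem epsw_nsmul_apply {k : Type*} [Field k] {d : ℕ} {ζ : k}
    (hwB : ∀ a b, B (w a) (w b) = B a b) (n : ℕ) (x y : Λ) :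
    epsw d ζ B w ((n • w) x) ((n • w) y) = epsw d ζ B w x y := by
  refine prod_congr rfl fun j _ => ?_
  rw [← AddAut.add_apply, ← add_nsmul, add_comm, add_nsmul, AddAut.add_apply,
    pairing_nsmul_apply hwB]

theorem sum_pairing_orbit_eq_zero [Finite (Λ ⧸ coinvSub w)] {d : ℕ}
    (hwB : ∀ a b, B (w a) (w b) = B a b) (hwd : d • w = 0) (γ x : Λ) :
    ∑ j ∈ range d, B ((j • w) γ) x = 0 := by
  suffices hF : ∑ j ∈ range d, B ((j • w) γ) = 0 by
    simpa using DFunLike.congr_fun hF x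
  refine eq_zero_of_invariant_of_finite_coinv (w := w) fun y => ?_
  have hper : Function.Periodic (fun j : ℕ => B ((j • w) γ) (w y)) d := fun j => by
    simp only [add_nsmul, hwd, add_zero]
  simp only [AddMonoidHom.finsetSum_apply, ← hper.sum_range_add 1]
  refine sum_congr rfl fun j _ => ?_
  rw [add_nsmul, one_nsmul, AddAut.add_apply, hwB]

theorem sum_corootHom_orbit_eq_zero (k : Type*) [Field k] [Finite (Λ ⧸ coinvSub w)] {d : ℕ}
    (hwB : ∀ a b, B (w a) (w b) = B a b) (hwd : d • w = 0) (γ : Λ) :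
    ∑ j ∈ range d, corootHom k B ((j • w) γ) = 0 := by
  ext x
  simp only [AddMonoidHom.finsetSum_apply, corootHom, AddMonoidHom.comp_apply,
    Int.coe_castAddHom, ← Int.cast_sum, sum_pairing_orbit_eq_zero hwB hwd, Int.cast_zero,
    AddMonoidHom.zero_apply]

theorem pairing_add_self {α β : Λ} (hBsymm : ∀ a b, B a b = B b a) (hα : B α α = 2)
    (hβ : B β β = 2) : B (α + β) (α + β) = 4 + 2 * B α β := by
  simp only [map_add, AddMonoidHom.add_apply, hα, hβ, hBsymm β α]
  ring

theorem add_eq_zero_of_pairing_eq_neg_two {α β : Λ} (hBsymm : ∀ a b, B a b = B b a)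
    (hBpos : ∀ a, a ≠ 0 → 0 < B a a) (hα : B α α = 2) (hβ : B β β = 2) (h : B α β = -2) :
    α + β = 0 := by
  by_contra hne
  have := hBpos _ hne
  rw [pairing_add_self hBsymm hα hβ, h] at this
  omega

end LatticeAutomorphism

section Bracket

variable {k : Type*} [Field k] {d : ℕ} {ζ : k} {Λ : Type*} [AddCommGroup Λ]
  {B : Λ →+ Λ →+ ℤ} {w : AddAut Λ} {Lt : Type*} [Group Lt] {pr : Lt → Λ} {wt : MulAut Lt}
  {H : Type*} [AddCommGroup H] [Module k H] {X : Lt → H} {br : H →ₗ[k] H →ₗ[k] H}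

theorem pr_pow_apply (hwtpr : ∀ a, pr (wt a) = w (pr a)) (n : ℕ) (a : Lt) :
    pr ((wt ^ n) a) = (n • w) (pr a) := by
  induction n with
  | zero => rfl
  | succ n ih => rw [pow_succ', MulAut.mul_apply, hwtpr, ih, succ_nsmul', AddAut.add_apply]

theorem pairing_pr_pow_apply_self_eq_two (hwB : ∀ a b, B (w a) (w b) = B a b)
    (hwtpr : ∀ a, pr (wt a) = w (pr a)) (n : ℕ) {a : Lt} (ha : B (pr a) (pr a) = 2) :
    B (pr ((wt ^ n) a)) (pr ((wt ^ n) a)) = 2 := by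
  rw [pr_pow_apply hwtpr, pairing_nsmul_apply hwB, ha]

theorem pr_pow_apply_add (hwtpr : ∀ a, pr (wt a) = w (pr a)) (n : ℕ) (a b : Lt) :
    pr ((wt ^ n) a) + pr ((wt ^ n) b) = (n • w) (pr a + pr b) := by
  rw [pr_pow_apply hwtpr, pr_pow_apply hwtpr, map_add]

theorem sum_bracket_orbit_of_add_root (hwB : ∀ a b, B (w a) (w b) = B a b)
    (hwtpr : ∀ a, pr (wt a) = w (pr a))
    (hbr_XXΦ : ∀ a b : Lt, B (pr a) (pr a) = 2 → B (pr b) (pr b) = 2 →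
      B (pr a + pr b) (pr a + pr b) = 2 →
      br (X a) (X b) = (epsw d ζ B w (pr a) (pr b)) • X (a * b))
    {a b : Lt} (ha : B (pr a) (pr a) = 2) (hb : B (pr b) (pr b) = 2)
    (hab : B (pr a + pr b) (pr a + pr b) = 2) :
    ∑ j ∈ range d, br (X ((wt ^ j) a)) (X ((wt ^ j) b)) =
      epsw d ζ B w (pr a) (pr b) • Zsum d wt X (a * b) := by
  rw [Zsum, smul_sum]
  refine sum_congr rfl fun j _ => ?_
  have hroot := fun c => pairing_pr_pow_apply_self_eq_two (a := c) hwB hwtpr j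
  rw [hbr_XXΦ _ _ (hroot a ha) (hroot b hb)
      (by rw [pr_pow_apply_add hwtpr, pairing_nsmul_apply hwB, hab]),
    pr_pow_apply hwtpr, pr_pow_apply hwtpr, epsw_nsmul_apply hwB, map_mul]

theorem sum_bracket_orbit_of_add_eq_zero [Finite (Λ ⧸ coinvSub w)] {z : Lt}
    {tEmb : (Λ →+ k) →ₗ[k] H} (hwB : ∀ a b, B (w a) (w b) = B a b) (hwd : d • w = 0)
    (hpr : ∀ a b : Lt, pr (a * b) = pr a + pr b) (hker : ∀ a : Lt, pr a = 0 → ∃ i : ℤ, a = z ^ i)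
    (hwtpr : ∀ a, pr (wt a) = w (pr a)) (hwtz : wt z = z)
    (hbr_XX₀ : ∀ a b : Lt, B (pr a) (pr a) = 2 → B (pr b) (pr b) = 2 →
      pr a + pr b = 0 → ∀ i : ℤ, a * b = z ^ i →
      br (X a) (X b) = ((epsw d ζ B w (pr a) (pr b)) * ζ ^ i) • tEmb (corootHom k B (pr a)))
    {a b : Lt} (ha : B (pr a) (pr a) = 2) (hb : B (pr b) (pr b) = 2) (hab : pr a + pr b = 0) :
    ∑ j ∈ range d, br (X ((wt ^ j) a)) (X ((wt ^ j) b)) = 0 := by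
  obtain ⟨i, hi⟩ := hker (a * b) (by rw [hpr, hab])
  have hterm : ∀ j : ℕ, br (X ((wt ^ j) a)) (X ((wt ^ j) b)) =
      (epsw d ζ B w (pr a) (pr b) * ζ ^ i) • tEmb (corootHom k B ((j • w) (pr a))) := fun j => by
    have hroot := fun c => pairing_pr_pow_apply_self_eq_two (a := c) hwB hwtpr j
    have hz : (wt ^ j) z = z := (MulAction.stabilizer (MulAut Lt) z).pow_mem hwtz j
    rw [hbr_XX₀ _ _ (hroot a ha) (hroot b hb) (by rw [pr_pow_apply_add hwtpr, hab, map_zero]) i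
        (by rw [← map_mul, hi, map_zpow, hz]),
      pr_pow_apply hwtpr, pr_pow_apply hwtpr, epsw_nsmul_apply hwB]
  rw [sum_congr rfl fun j _ => hterm j, ← smul_sum, ← map_sum,
    sum_corootHom_orbit_eq_zero k hwB hwd, map_zero, smul_zero]

theorem sum_bracket_orbit_of_add_nonroot (hwB : ∀ a b, B (w a) (w b) = B a b)
    (hwtpr : ∀ a, pr (wt a) = w (pr a))
    (hbr_XXo : ∀ a b : Lt, B (pr a) (pr a) = 2 → B (pr b) (pr b) = 2 →
      pr a + pr b ≠ 0 → B (pr a + pr b) (pr a + pr b) ≠ 2 →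
      br (X a) (X b) = 0)
    {a b : Lt} (ha : B (pr a) (pr a) = 2) (hb : B (pr b) (pr b) = 2)
    (hab₀ : pr a + pr b ≠ 0) (habΦ : B (pr a + pr b) (pr a + pr b) ≠ 2) :
    ∑ j ∈ range d, br (X ((wt ^ j) a)) (X ((wt ^ j) b)) = 0 := by
  refine sum_eq_zero fun j _ => ?_
  have hroot := fun c => pairing_pr_pow_apply_self_eq_two (a := c) hwB hwtpr j
  refine hbr_XXo _ _ (hroot a ha) (hroot b hb) ?_ ?_ <;> rw [pr_pow_apply_add hwtpr]
  · exact (map_ne_zero_iff _ (AddEquiv.injective _)).mpr hab₀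
  · rwa [pairing_nsmul_apply hwB]

theorem sum_bracket_orbit [Finite (Λ ⧸ coinvSub w)] {z : Lt} {tEmb : (Λ →+ k) →ₗ[k] H}
    (hBsymm : ∀ a b : Λ, B a b = B b a) (hBpos : ∀ a : Λ, a ≠ 0 → 0 < B a a)
    (hwB : ∀ a b, B (w a) (w b) = B a b) (hwd : d • w = 0)
    (hpr : ∀ a b : Lt, pr (a * b) = pr a + pr b) (hker : ∀ a : Lt, pr a = 0 → ∃ i : ℤ, a = z ^ i)
    (hbr_XX₀ : ∀ a b : Lt, B (pr a) (pr a) = 2 → B (pr b) (pr b) = 2 →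
      pr a + pr b = 0 → ∀ i : ℤ, a * b = z ^ i →
      br (X a) (X b) = ((epsw d ζ B w (pr a) (pr b)) * ζ ^ i) • tEmb (corootHom k B (pr a)))
    (hbr_XXΦ : ∀ a b : Lt, B (pr a) (pr a) = 2 → B (pr b) (pr b) = 2 →
      B (pr a + pr b) (pr a + pr b) = 2 →
      br (X a) (X b) = (epsw d ζ B w (pr a) (pr b)) • X (a * b))
    (hbr_XXo : ∀ a b : Lt, B (pr a) (pr a) = 2 → B (pr b) (pr b) = 2 →
      pr a + pr b ≠ 0 → B (pr a + pr b) (pr a + pr b) ≠ 2 →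
      br (X a) (X b) = 0)
    (hwtpr : ∀ a, pr (wt a) = w (pr a)) (hwtz : wt z = z)
    {a b : Lt} (ha : B (pr a) (pr a) = 2) (hb : B (pr b) (pr b) = 2) :
    ∑ j ∈ range d, br (X ((wt ^ j) a)) (X ((wt ^ j) b)) =
      if B (pr a) (pr b) = -1 then epsw d ζ B w (pr a) (pr b) • Zsum d wt X (a * b) else 0 := by
  have hnorm := pairing_add_self hBsymm ha hb
  split_ifs with h₁
  · exact sum_bracket_orbit_of_add_root hwB hwtpr hbr_XXΦ ha hb (by rw [hnorm, h₁]; rfl)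
  by_cases h₂ : B (pr a) (pr b) = -2
  · exact sum_bracket_orbit_of_add_eq_zero hwB hwd hpr hker hwtpr hwtz hbr_XX₀ ha hb
      (add_eq_zero_of_pairing_eq_neg_two hBsymm hBpos ha hb h₂)
  refine sum_bracket_orbit_of_add_nonroot hwB hwtpr hbr_XXo ha hb (fun h₀ => h₂ ?_) (by omega)
  rw [h₀, map_zero] at hnorm
  omega

end Bracket

theorem bracket_of_Z_elements_general
    (k : Type*) [Field k]
    (d : ℕ) (ζ : k)
    -- the simply laced root lattice Λ with elliptic automorphism w of order d
    (Λ : Type*) [AddCommGroup Λ]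
    (B : Λ →+ Λ →+ ℤ)
    (hBsymm : ∀ a b : Λ, B a b = B b a)
    (hBpos : ∀ a : Λ, a ≠ 0 → 0 < B a a)
    (w : AddAut Λ) (hwB : ∀ a b : Λ, B (w a) (w b) = B a b)
    (hword : addOrderOf w = d)
    (hell : Finite (Λ ⧸ coinvSub w))
    -- the central extension Λ̃ of Λ by ⟨ζ⟩ (pulled back from ℋ over the coinvariants)
    (Lt : Type*) [Group Lt]
    (z : Lt)
    (pr : Lt → Λ) (hpr : ∀ a b : Lt, pr (a * b) = pr a + pr b)
    (hker : ∀ a : Lt, pr a = 0 ↔ ∃ i : ℤ, a = z ^ i)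
    -- the underlying vector space 𝔥 = 𝔱 ⊕ 𝔩
    (H : Type*) [AddCommGroup H] [Module k H]
    (tEmb : (Λ →+ k) →ₗ[k] H)
    (X : Lt → H)
    -- the bracket of the construction
    (br : H →ₗ[k] H →ₗ[k] H)
    (hbr_XX₀ : ∀ a b : Lt, B (pr a) (pr a) = 2 → B (pr b) (pr b) = 2 →
      pr a + pr b = 0 → ∀ i : ℤ, a * b = z ^ i →
      br (X a) (X b) = ((epsw d ζ B w (pr a) (pr b)) * ζ ^ i) • tEmb (corootHom k B (pr a)))
    (hbr_XXΦ : ∀ a b : Lt, B (pr a) (pr a) = 2 → B (pr b) (pr b) = 2 →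
      B (pr a + pr b) (pr a + pr b) = 2 →
      br (X a) (X b) = (epsw d ζ B w (pr a) (pr b)) • X (a * b))
    (hbr_XXo : ∀ a b : Lt, B (pr a) (pr a) = 2 → B (pr b) (pr b) = 2 →
      pr a + pr b ≠ 0 → B (pr a + pr b) (pr a + pr b) ≠ 2 →
      br (X a) (X b) = 0)
    -- the lift of w to Λ̃ (acting as w on Λ and trivially on ℋ)
    (wt : MulAut Lt) (hwtpr : ∀ a : Lt, pr (wt a) = w (pr a))
    (hwtz : wt z = z) (hwtd : wt ^ d = 1)
    :
    ∀ a b : Lt, B (pr a) (pr a) = 2 → B (pr b) (pr b) = 2 →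
      br (Zsum d wt X a) (Zsum d wt X b) =
        ∑ j ∈ (Finset.range d).filter (fun j => B ((j • w) (pr a)) (pr b) = -1),
          epsw d ζ B w ((j • w) (pr a)) (pr b) • Zsum d wt X ((wt ^ j) a * b) := by
  intro a b ha hb
  have hwd : d • w = 0 := hword ▸ addOrderOf_nsmul_eq_zero w
  have hper : ∀ j : ℕ, Function.Periodic (fun i : ℕ => br (X ((wt ^ i) a)) (X ((wt ^ j) b))) d :=
    fun j i => by simp only [pow_add, hwtd, mul_one]
  calc br (Zsum d wt X a) (Zsum d wt X b)
      = ∑ j ∈ range d, ∑ i ∈ range d, br (X ((wt ^ i) a)) (X ((wt ^ j) b)) := by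
        simp only [Zsum, map_sum, LinearMap.sum_apply]
    _ = ∑ j ∈ range d, ∑ s ∈ range d, br (X ((wt ^ j) ((wt ^ s) a))) (X ((wt ^ j) b)) := by
        refine sum_congr rfl fun j _ => ?_
        simp only [← (hper j).sum_range_add j, pow_add, MulAut.mul_apply]
    _ = ∑ s ∈ range d, ∑ j ∈ range d, br (X ((wt ^ j) ((wt ^ s) a))) (X ((wt ^ j) b)) :=
        sum_comm
    _ = ∑ s ∈ range d, if B ((s • w) (pr a)) (pr b) = -1 then
          epsw d ζ B w ((s • w) (pr a)) (pr b) • Zsum d wt X ((wt ^ s) a * b) else 0 := by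
        refine sum_congr rfl fun s _ => ?_
        rw [sum_bracket_orbit hBsymm hBpos hwB hwd hpr (fun c => (hker c).1) hbr_XX₀ hbr_XXΦ
          hbr_XXo hwtpr hwtz (pairing_pr_pow_apply_self_eq_two hwB hwtpr s ha) hb,
          pr_pow_apply hwtpr]
    _ = _ := (sum_filter _ _).symm

/-- **Lemma 4.3.** For `Z_α̃ = ∑_j X_{w^jα̃}` one has
`[Z_α̃, Z_β̃] = ∑_{j ∈ I_{α,β}(-1)} ε_w(w^jα, β) Z_{(w^jα̃)β̃}`. -/
theorem bracket_of_Z_elements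
    (k : Type*) [Field k] [CharZero k]
    (d : ℕ) (hd : 0 < d) (ζ : k) (hζ : IsPrimitiveRoot ζ d)
    -- the simply laced root lattice Λ with elliptic automorphism w of order d
    (Λ : Type*) [AddCommGroup Λ] [Module.Free ℤ Λ] [Module.Finite ℤ Λ]
    (B : Λ →+ Λ →+ ℤ)
    (hBsymm : ∀ a b : Λ, B a b = B b a)
    (hBpos : ∀ a : Λ, a ≠ 0 → 0 < B a a)
    (hBgen : AddSubgroup.closure {a : Λ | B a a = 2} = ⊤)
    (w : AddAut Λ) (hwB : ∀ a b : Λ, B (w a) (w b) = B a b)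
    (hword : addOrderOf w = d)
    (hell : Finite (Λ ⧸ coinvSub w))
    -- the central extension Λ̃ of Λ by ⟨ζ⟩ (pulled back from ℋ over the coinvariants)
    (Lt : Type*) [Group Lt]
    (z : Lt) (hzc : z ∈ Subgroup.center Lt) (hzord : orderOf z = d)
    (pr : Lt → Λ) (hpr : ∀ a b : Lt, pr (a * b) = pr a + pr b)
    (hprs : Function.Surjective pr)
    (hker : ∀ a : Lt, pr a = 0 ↔ ∃ i : ℤ, a = z ^ i)
    (hfac : ∀ a b c : Lt, pr a - pr b ∈ coinvSub w →
      a * c * a⁻¹ * c⁻¹ = b * c * b⁻¹ * c⁻¹)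
    -- the commutator pairing of Λ̃ is ⟨·,·⟩_w (Lepowsky--Reeder pairing)
    (hcomm : ∀ a b : Lt, a * b * a⁻¹ * b⁻¹ = z ^ (commExpW d B w (pr a) (pr b)))
    -- the underlying vector space 𝔥 = 𝔱 ⊕ 𝔩
    (H : Type*) [AddCommGroup H] [Module k H]
    (tEmb : (Λ →+ k) →ₗ[k] H) (htinj : Function.Injective tEmb)
    (X : Lt → H)
    (hXζ : ∀ a : Lt, B (pr a) (pr a) = 2 → X (z * a) = ζ • X a)
    (sec : Λ → Lt) (hsec : ∀ α : Λ, pr (sec α) = α)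
    (hXind : LinearIndependent k (fun α : {α : Λ // B α α = 2} => X (sec α)))
    (hspan : Submodule.span k
      (Set.range ⇑tEmb ∪ X '' {a : Lt | B (pr a) (pr a) = 2}) = ⊤)
    (hdisj : Disjoint (LinearMap.range tEmb)
      (Submodule.span k (X '' {a : Lt | B (pr a) (pr a) = 2})))
    -- the bracket of the construction
    (br : H →ₗ[k] H →ₗ[k] H)
    (hbr_tt : ∀ f g : Λ →+ k, br (tEmb f) (tEmb g) = 0)
    (hbr_tX : ∀ (α : Λ) (a : Lt), B α α = 2 → B (pr a) (pr a) = 2 →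
      br (tEmb (corootHom k B α)) (X a) = ((B α (pr a) : k)) • X a)
    (hbr_Xt : ∀ (α : Λ) (a : Lt), B α α = 2 → B (pr a) (pr a) = 2 →
      br (X a) (tEmb (corootHom k B α)) = (-(B α (pr a) : k)) • X a)
    (hbr_XX₀ : ∀ a b : Lt, B (pr a) (pr a) = 2 → B (pr b) (pr b) = 2 →
      pr a + pr b = 0 → ∀ i : ℤ, a * b = z ^ i →
      br (X a) (X b) = ((epsw d ζ B w (pr a) (pr b)) * ζ ^ i) • tEmb (corootHom k B (pr a)))
    (hbr_XXΦ : ∀ a b : Lt, B (pr a) (pr a) = 2 → B (pr b) (pr b) = 2 →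
      B (pr a + pr b) (pr a + pr b) = 2 →
      br (X a) (X b) = (epsw d ζ B w (pr a) (pr b)) • X (a * b))
    (hbr_XXo : ∀ a b : Lt, B (pr a) (pr a) = 2 → B (pr b) (pr b) = 2 →
      pr a + pr b ≠ 0 → B (pr a + pr b) (pr a + pr b) ≠ 2 →
      br (X a) (X b) = 0)
    -- the lift of w to Λ̃ (acting as w on Λ and trivially on ℋ)
    (wt : MulAut Lt) (hwtpr : ∀ a : Lt, pr (wt a) = w (pr a))
    (hwtz : wt z = z) (hwtd : wt ^ d = 1)
    :
    ∀ a b : Lt, B (pr a) (pr a) = 2 → B (pr b) (pr b) = 2 →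
      br (Zsum d wt X a) (Zsum d wt X b) =
        ∑ j ∈ (Finset.range d).filter (fun j => B ((j • w) (pr a)) (pr b) = -1),
          epsw d ζ B w ((j • w) (pr a)) (pr b) • Zsum d wt X ((wt ^ j) a * b) :=
  bracket_of_Z_elements_general k d ζ Λ B hBsymm hBpos w hwB hword hell Lt z pr hpr hker H tEmb X br
    hbr_XX₀ hbr_XXΦ hbr_XXo wt hwtpr hwtz hwtd

end
end

section
/- Let Λ be a simply laced root lattice whose set of roots Φ forms an irreducible root system, let Δ = {α_1, ..., α_ℓ} be a base of simple roots of Φ, and let c = s_{α_1} ··· s_{α_ℓ} be a Coxeter element, i.e. the product (in some order, each appearing once) of the simple reflections s_{α_i}(x) = x − (x, α_i)α_i acting on Λ ⊗ ℝ. Let Λ⁰ := {γ ∈ Λ ⊗ ℝ | (γ, α) ∈ ℤ for all α ∈ Λ} be the weight lattice. Then Λ = (1 − c)Λ⁰; in particular Λ ⊆ (1 − c)Λ⁰, so the pairing ⟨·,·⟩_c on Λ_c = Λ/(1−c)Λ is trivial. -/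
/-!
Write `c = s₁ ⋯ s_ℓ` with `sₖ = s_{βₖ}`. Peeling off the first reflection gives
`γ - cγ = (β₁, γ) β₁ + s₁ (γ - s₂ ⋯ s_ℓ γ)`, so `(1 - c)Λ⁰ ⊆ Λ` because each `sₖ` preserves `Λ`.
Conversely, with `ω` dual to `β₁` and orthogonal to `β₂, …, β_ℓ`, we get `(1 - c)ω = β₁`, and
replacing `γ` by `γ - (β₁, γ)ω` shows `(1 - c)Λ⁰ ⊇ s₁((1 - s₂ ⋯ s_ℓ)Λ⁰)`; induction on `ℓ` gives
`Λ ⊆ (1 - c)Λ⁰`.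

Since `Λ` spans, `1 - c` is onto, and `(∑_{j<d} c^j)(1 - c) = 1 - c^d = 0` forces `∑_{j<d} c^j = 0`.
Summation by parts then gives `∑_{j<d} j (c^j (1 - c)γ, b) = -d (γ, b) ∈ dℤ` for `γ ∈ Λ⁰`, `b ∈ Λ`.
-/

open Set AddSubgroup

namespace RootLattice

section CommRing

variable {K V : Type*} [CommRing K] [AddCommGroup V] [Module K V] (B : V →ₗ[K] V →ₗ[K] K)

def reflection (v : V) : Module.End K V := LinearMap.id - (B v).smulRight v

def coxeterProd {n : ℕ} (v : Fin n → V) : Module.End K V :=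
  (List.ofFn fun i => reflection B (v i)).prod

def integralDual (S : Set V) : AddSubgroup V where
  carrier := {γ | ∀ a ∈ S, ∃ n : ℤ, B γ a = n}
  add_mem' {x y} hx hy a ha := by
    obtain ⟨m, hm⟩ := hx a ha
    obtain ⟨n, hn⟩ := hy a ha
    exact ⟨m + n, by simp [hm, hn]⟩
  zero_mem' a _ := ⟨0, by simp⟩
  neg_mem' {x} hx a ha := by
    obtain ⟨m, hm⟩ := hx a ha
    exact ⟨-m, by simp [hm]⟩

variable {B}

@[simp]
theorem reflection_apply (v x : V) : reflection B v x = x - B v x • v := rfl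

@[simp]
theorem coxeterProd_elim0 : coxeterProd B (Fin.elim0 : Fin 0 → V) = 1 := rfl

@[simp]
theorem coxeterProd_cons {n : ℕ} (x : V) (v : Fin n → V) :
    coxeterProd B (Fin.cons x v) = reflection B x * coxeterProd B v := by
  simp [coxeterProd, List.ofFn_succ]

theorem sub_coxeterProd_cons_apply {n : ℕ} (x : V) (v : Fin n → V) (γ : V) :
    γ - coxeterProd B (Fin.cons x v) γ =
      B x γ • x + reflection B x (γ - coxeterProd B v γ) := by
  simp only [coxeterProd_cons, Module.End.mul_apply, reflection_apply, map_sub]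
  abel

theorem coxeterProd_apply_of_forall_eq_zero {n : ℕ} {v : Fin n → V} {γ : V}
    (h : ∀ i, B (v i) γ = 0) : coxeterProd B v γ = γ := by
  induction v using Fin.consInduction with
  | elim0 => rfl
  | cons x v ih =>
    have hx : B x γ = 0 := by simpa using h 0
    rw [coxeterProd_cons, Module.End.mul_apply, ih fun i => by simpa using h i.succ,
      reflection_apply, hx, zero_smul, sub_zero]

theorem sub_coxeterProd_cons_apply_of_dual {n : ℕ} {x ω : V} {v : Fin n → V}
    (hxω : B x ω = 1) (hPω : coxeterProd B v ω = ω) :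
    ω - coxeterProd B (Fin.cons x v) ω = x := by
  simp [hxω, hPω]

theorem sub_coxeterProd_cons_apply_sub_smul {n : ℕ} {x ω : V} {v : Fin n → V}
    (hxω : B x ω = 1) (hPω : coxeterProd B v ω = ω) (γ : V) :
    (γ - B x γ • ω) - coxeterProd B (Fin.cons x v) (γ - B x γ • ω) =
      reflection B x (γ - coxeterProd B v γ) := by
  have hx : B x (γ - B x γ • ω) = 0 := by simp [hxω]
  rw [sub_coxeterProd_cons_apply, hx, zero_smul, zero_add, map_sub (coxeterProd B v), map_smul,
    hPω]
  congr 1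
  abel

theorem integralDual_closure (S : Set V) : integralDual B (closure S) = integralDual B S := by
  refine le_antisymm (fun γ hγ a ha => hγ a (subset_closure ha)) fun γ hγ a ha => ?_
  have : closure S ≤ (Int.castAddHom K).range.comap (B γ).toAddMonoidHom :=
    (closure_le _).2 fun b hb => by obtain ⟨n, hn⟩ := hγ b hb; exact ⟨n, hn.symm⟩
  obtain ⟨n, hn⟩ := this ha
  exact ⟨n, hn.symm⟩

theorem mem_integralDual_range_cons {n : ℕ} {x γ : V} {v : Fin n → V} :
    γ ∈ integralDual B (range (Fin.cons x v)) ↔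
      (∃ m : ℤ, B γ x = m) ∧ γ ∈ integralDual B (range v) := by
  rw [Fin.range_cons]
  exact forall_mem_insert

theorem reflection_mem {L : AddSubgroup V} {v x : V} (hv : v ∈ L) (hvL : v ∈ integralDual B L)
    (hx : x ∈ L) : reflection B v x ∈ L := by
  obtain ⟨n, hn⟩ := hvL x hx
  rw [reflection_apply, hn, Int.cast_smul_eq_zsmul]
  exact sub_mem hx (zsmul_mem hv n)

theorem sub_coxeterProd_mem (hB : ∀ x y, B x y = B y x) {L : AddSubgroup V} {n : ℕ}
    {v : Fin n → V} (hvL : ∀ i, v i ∈ L) (hvint : ∀ i, v i ∈ integralDual B L) {γ : V}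
    (hγ : γ ∈ integralDual B (range v)) : γ - coxeterProd B v γ ∈ L := by
  induction v using Fin.consInduction with
  | elim0 => simp
  | cons x v ih =>
    obtain ⟨⟨m, hm⟩, hγ⟩ := mem_integralDual_range_cons.1 hγ
    have hxL : x ∈ L := by simpa using hvL 0
    rw [sub_coxeterProd_cons_apply, hB, hm, Int.cast_smul_eq_zsmul]
    refine add_mem (zsmul_mem hxL m) (reflection_mem hxL (by simpa using hvint 0) ?_)
    exact ih (fun i => by simpa using hvL i.succ) (fun i => by simpa using hvint i.succ) hγ

end CommRing

section Field

variable {K V : Type*} [Field K] [AddCommGroup V] [Module K V] [FiniteDimensional K V]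
  {B : V →ₗ[K] V →ₗ[K] K}

theorem exists_dual_of_notMem_span (hnd : LinearMap.BilinForm.Nondegenerate B) {x : V}
    {s : Set V} (hx : x ∉ Submodule.span K s) : ∃ ω, B ω x = 1 ∧ ∀ y ∈ s, B ω y = 0 := by
  obtain ⟨f, hfx, hf⟩ := Submodule.exists_dual_map_eq_bot_of_notMem hx inferInstance
  refine ⟨(LinearMap.BilinForm.toDual B hnd).symm ((f x)⁻¹ • f), ?_, fun y hy => ?_⟩
  · rw [← LinearMap.BilinForm.toDual_def hnd]; simp [hfx]
  · have : f y ∈ (Submodule.span K s).map f := Submodule.mem_map_of_mem (Submodule.subset_span hy)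
    rw [hf, Submodule.mem_bot] at this
    rw [← LinearMap.BilinForm.toDual_def hnd]; simp [this]

theorem closure_range_le_map_integralDual (hB : ∀ x y, B x y = B y x)
    (hnd : LinearMap.BilinForm.Nondegenerate B) {n : ℕ} {v : Fin n → V}
    (hv : LinearIndependent K v) (hint : ∀ i j, ∃ m : ℤ, B (v i) (v j) = m) :
    closure (range v) ≤ (integralDual B (range v)).map (1 - coxeterProd B v).toAddMonoidHom := by
  induction v using Fin.consInduction with
  | elim0 => simp
  | cons x v ih =>
    rw [linearIndependent_finCons] at hv
    obtain ⟨ω, hωx, hωv⟩ := exists_dual_of_notMem_span hnd hv.2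
    have hxω : B x ω = 1 := by rw [hB, hωx]
    have hPω : coxeterProd B v ω = ω :=
      coxeterProd_apply_of_forall_eq_zero fun i => by rw [hB]; exact hωv _ (mem_range_self i)
    set T := (integralDual B (range (Fin.cons x v))).map
      (1 - coxeterProd B (Fin.cons x v)).toAddMonoidHom
    have hT : ∀ γ ∈ integralDual B (range (Fin.cons x v)),
        γ - coxeterProd B (Fin.cons x v) γ ∈ T := fun γ hγ => ⟨γ, hγ, by simp⟩
    have hx : x ∈ T := by
      rw [← sub_coxeterProd_cons_apply_of_dual hxω hPω]
      exact hT ω (mem_integralDual_range_cons.2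
        ⟨⟨1, by simp [hωx]⟩, fun a ha => ⟨0, by simp [hωv a ha]⟩⟩)
    have hsx : ∀ γ ∈ integralDual B (range v), reflection B x (γ - coxeterProd B v γ) ∈ T := by
      intro γ hγ
      rw [← sub_coxeterProd_cons_apply_sub_smul hxω hPω]
      refine hT _ (mem_integralDual_range_cons.2 ⟨⟨0, by simp [hωx, hB _ γ]⟩, fun a ha => ?_⟩)
      obtain ⟨m, hm⟩ := hγ a ha
      exact ⟨m, by simp [hm, hωv a ha]⟩
    refine (closure_le _).2 fun a ha => ?_
    rw [Fin.range_cons] at ha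
    obtain rfl | ⟨i, rfl⟩ := ha
    · exact hx
    obtain ⟨γ, hγ, hγv⟩ := ih hv.1 (fun i j => by simpa using hint i.succ j.succ)
      (subset_closure (mem_range_self i))
    obtain ⟨m, hm⟩ : ∃ m : ℤ, B x (v i) = m := by simpa using hint 0 i.succ
    have hvi : v i = reflection B x (v i) + m • x := by
      rw [reflection_apply, hm, Int.cast_smul_eq_zsmul, sub_add_cancel]
    rw [hvi, ← hγv]
    exact add_mem (by simpa using hsx γ hγ) (zsmul_mem hx m)

theorem map_integralDual_eq_closure (hB : ∀ x y, B x y = B y x)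
    (hnd : LinearMap.BilinForm.Nondegenerate B) {n : ℕ} {v : Fin n → V}
    (hv : LinearIndependent K v) (hint : ∀ i j, ∃ m : ℤ, B (v i) (v j) = m) :
    (integralDual B (range v)).map (1 - coxeterProd B v).toAddMonoidHom = closure (range v) := by
  refine le_antisymm ?_ (closure_range_le_map_integralDual hB hnd hv hint)
  rintro _ ⟨γ, hγ, rfl⟩
  have hvint : ∀ i, v i ∈ integralDual B (closure (range v)) := by
    rw [integralDual_closure]
    rintro i _ ⟨j, rfl⟩
    exact hint i j
  simpa using sub_coxeterProd_mem hB (fun i => subset_closure (mem_range_self i)) hvint hγ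

end Field

theorem closure_eq_closure_range_of_forall_eq_sum_or_eq_neg_sum {K V ι : Type*} [Fintype ι]
    [Ring K] [AddCommGroup V] [Module K V] {Φ : Set V} {α : ι → V} (hα : ∀ i, α i ∈ Φ)
    (hbase : ∀ φ ∈ Φ, (∃ f : ι → ℕ, φ = ∑ i, (f i : K) • α i) ∨
      (∃ f : ι → ℕ, φ = -∑ i, (f i : K) • α i)) :
    closure Φ = closure (range α) := by
  refine le_antisymm ((closure_le _).2 fun φ hφ => ?_) (closure_mono (range_subset_iff.2 hα))
  have hsum : ∀ f : ι → ℕ, ∑ i, (f i : K) • α i ∈ closure (range α) := fun f =>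
    sum_mem fun i _ => by
      rw [Nat.cast_smul_eq_nsmul]; exact nsmul_mem (subset_closure (mem_range_self i)) _
  rcases hbase φ hφ with ⟨f, rfl⟩ | ⟨f, rfl⟩
  exacts [hsum f, neg_mem (hsum f)]

end RootLattice

open Finset in
theorem Finset.sum_range_natCast_mul_sub {R : Type*} [CommRing R] (g : ℕ → R) (n : ℕ) :
    ∑ j ∈ range n, (j : R) * (g j - g (j + 1)) = ∑ j ∈ range n, g (j + 1) - n * g n := by
  induction n with
  | zero => simp
  | succ n ih => rw [sum_range_succ, ih, sum_range_succ]; push_cast; ring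

theorem Module.End.sum_range_pow_eq_zero {K V : Type*} [CommRing K] [AddCommGroup V] [Module K V]
    {f : Module.End K V} (hf : Function.Surjective ⇑(1 - f)) {d : ℕ} (hd : f ^ d = 1) :
    ∑ j ∈ Finset.range d, f ^ j = 0 := by
  ext x
  obtain ⟨y, rfl⟩ := hf x
  rw [← Module.End.mul_apply, geom_sum_mul_neg, hd, sub_self, LinearMap.zero_apply,
    LinearMap.zero_apply]

open Finset in
theorem sum_Ico_natCast_mul_apply_sub_apply {K V : Type*} [CommRing K] [AddCommGroup V]
    [Module K V] (B : V →ₗ[K] V →ₗ[K] K) {f : Module.End K V}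
    (hf : Function.Surjective ⇑(1 - f)) {d : ℕ} (hd : f ^ d = 1) (γ b : V) :
    ∑ j ∈ Ico 1 d, (j : K) * B ((f ^ j) (γ - f γ)) b = -(d * B γ b) := by
  set g : ℕ → K := fun j => B ((f ^ j) γ) b
  have hg : ∀ j, B ((f ^ j) (γ - f γ)) b = g j - g (j + 1) := fun j => by
    simp [g, pow_succ]
  have hperiod : g d = g 0 := by simp [g, hd]
  have hsum : ∑ j ∈ range d, g j = 0 := by
    rw [← LinearMap.sum_apply, ← map_sum, ← LinearMap.sum_apply,
      Module.End.sum_range_pow_eq_zero hf hd, LinearMap.zero_apply, map_zero,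
      LinearMap.zero_apply]
  have hshift : ∑ j ∈ range d, g (j + 1) = ∑ j ∈ range d, g j := by
    rw [← add_left_inj (g 0), ← sum_range_succ', sum_range_succ, hperiod]
  calc ∑ j ∈ Ico 1 d, (j : K) * B ((f ^ j) (γ - f γ)) b
      = ∑ j ∈ range d, (j : K) * (g j - g (j + 1)) := by
        rcases Nat.eq_zero_or_pos d with rfl | hd0
        · simp
        · rw [sum_range_eq_add_Ico _ hd0, Nat.cast_zero, zero_mul, zero_add]
          exact sum_congr rfl fun j _ => by rw [hg]
    _ = -(d * B γ b) := by
        rw [sum_range_natCast_mul_sub, hshift, hsum, hperiod]; simp [g]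

theorem coxeter_element_coinvariant_pairing_trivial_general
    (V : Type*) [AddCommGroup V] [Module ℝ V] [FiniteDimensional ℝ V]
    (Bf : V →ₗ[ℝ] V →ₗ[ℝ] ℝ)
    (hsymm : ∀ x y : V, Bf x y = Bf y x)
    (hpos : ∀ x : V, x ≠ 0 → 0 < Bf x x)
    -- Φ is a (reduced, crystallographic) simply laced root system spanning V
    (Φ : Set V)
    (hint : ∀ a ∈ Φ, ∀ b ∈ Φ, ∃ n : ℤ, Bf a b = n)
    (hspan : Submodule.span ℝ Φ = ⊤)
    -- a base of simple roots α_1, ..., α_ℓ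
    (ℓ : ℕ) (α : Fin ℓ → V) (hα : ∀ i, α i ∈ Φ)
    (hind : LinearIndependent ℝ α)
    (hbase : ∀ φ ∈ Φ, (∃ f : Fin ℓ → ℕ, φ = ∑ i, (f i : ℝ) • α i) ∨
      (∃ f : Fin ℓ → ℕ, φ = -∑ i, (f i : ℝ) • α i))
    -- a Coxeter element: the product of the simple reflections in some order
    (σ : Equiv.Perm (Fin ℓ))
    (c : V →ₗ[ℝ] V)
    (hc : c = (List.ofFn (fun i : Fin ℓ =>
      (LinearMap.id : V →ₗ[ℝ] V) - (Bf (α (σ i))).smulRight (α (σ i)))).prod)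
    -- d is the order of c
    (d : ℕ) (hcord : orderOf c = d) :
    -- Λ = (1 − c)Λ⁰
    ((AddSubgroup.closure Φ : Set V) =
      (fun γ : V => γ - c γ) ''
        {γ : V | ∀ a ∈ AddSubgroup.closure Φ, ∃ n : ℤ, Bf γ a = n}) ∧
    -- hence the pairing ⟨·,·⟩_c on Λ_c is trivial
    (∀ a ∈ AddSubgroup.closure Φ, ∀ b ∈ AddSubgroup.closure Φ,
      ∃ n : ℤ, ∑ j ∈ Finset.Ico 1 d, (j : ℝ) * Bf ((c ^ j) a) b = ((d : ℤ) * n : ℤ)) := by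
  open RootLattice in
  have hnd : LinearMap.BilinForm.Nondegenerate Bf := by
    refine ⟨fun x hx => ?_, fun x hx => ?_⟩ <;>
      · by_contra h
        exact (hpos x h).ne' (hx x)
  have hΛ : closure Φ = closure (range (α ∘ σ)) := by
    rw [σ.surjective.range_comp α, closure_eq_closure_range_of_forall_eq_sum_or_eq_neg_sum hα hbase]
  have hcox : coxeterProd Bf (α ∘ σ) = c := hc.symm
  have hlattice := map_integralDual_eq_closure hsymm hnd (hind.comp σ σ.injective)
    fun i j => hint _ (hα (σ i)) _ (hα (σ j))
  rw [← integralDual_closure, ← hΛ, hcox] at hlattice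
  have hpart1 : (closure Φ : Set V) = (fun γ => γ - c γ) '' integralDual Bf (closure Φ) := by
    conv_lhs => rw [← hlattice]
    rw [coe_map]
    rfl
  refine ⟨hpart1, fun a ha b hb => ?_⟩
  have hsurj : Function.Surjective ⇑(1 - c) := by
    refine LinearMap.range_eq_top.1 (eq_top_iff.2 (hspan ▸ Submodule.span_le.2 fun φ hφ => ?_))
    obtain ⟨γ, -, hγ⟩ := hpart1.subset (subset_closure hφ)
    exact ⟨γ, hγ⟩
  obtain ⟨γ, hγ, rfl⟩ := hpart1.subset ha
  obtain ⟨m, hm⟩ := hγ b hb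
  refine ⟨-m, ?_⟩
  rw [sum_Ico_natCast_mul_apply_sub_apply Bf hsurj (hcord ▸ pow_orderOf_eq_one c), hm]
  push_cast
  ring

/-- **Lemma 5.3.** Let `Λ` be a simply laced root lattice whose roots `Φ` form an
irreducible root system (realized inside the real vector space `V = Λ ⊗ ℝ` with bilinear
form `Bf`), let `c` be a Coxeter element of the Weyl group (a product of the simple
reflections, each occurring once, in some order), let `d` be the order of `c`, and let
`Λ⁰ = {γ ∈ V | (γ, Λ) ⊆ ℤ}` be the weight lattice.  Then `Λ = (1 − c)Λ⁰`; in particular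
`Λ ⊆ (1 − c)Λ⁰`, so the pairing `⟨·,·⟩_c` on `Λ_c` is trivial
(`∑_{j=1}^{d−1} j(c^jα, β) ≡ 0 mod d` on `Λ`). -/
theorem coxeter_element_coinvariant_pairing_trivial
    (V : Type*) [AddCommGroup V] [Module ℝ V] [FiniteDimensional ℝ V]
    (Bf : V →ₗ[ℝ] V →ₗ[ℝ] ℝ)
    (hsymm : ∀ x y : V, Bf x y = Bf y x)
    (hpos : ∀ x : V, x ≠ 0 → 0 < Bf x x)
    -- Φ is a (reduced, crystallographic) simply laced root system spanning V
    (Φ : Set V) (hΦfin : Φ.Finite) (hΦne : Φ.Nonempty)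
    (hroot2 : ∀ a ∈ Φ, Bf a a = 2)
    (hint : ∀ a ∈ Φ, ∀ b ∈ Φ, ∃ n : ℤ, Bf a b = n)
    (hspan : Submodule.span ℝ Φ = ⊤)
    (hneg : ∀ a ∈ Φ, -a ∈ Φ)
    (hrefl : ∀ a ∈ Φ, ∀ b ∈ Φ, b - Bf a b • a ∈ Φ)
    -- irreducibility
    (hirr : ∀ S T : Set V, S ∪ T = Φ → (∀ a ∈ S, ∀ b ∈ T, Bf a b = 0) →
      S = ∅ ∨ T = ∅)
    -- a base of simple roots α_1, ..., α_ℓ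
    (ℓ : ℕ) (α : Fin ℓ → V) (hα : ∀ i, α i ∈ Φ)
    (hind : LinearIndependent ℝ α)
    (hbase : ∀ φ ∈ Φ, (∃ f : Fin ℓ → ℕ, φ = ∑ i, (f i : ℝ) • α i) ∨
      (∃ f : Fin ℓ → ℕ, φ = -∑ i, (f i : ℝ) • α i))
    -- a Coxeter element: the product of the simple reflections in some order
    (σ : Equiv.Perm (Fin ℓ))
    (c : V →ₗ[ℝ] V)
    (hc : c = (List.ofFn (fun i : Fin ℓ =>
      (LinearMap.id : V →ₗ[ℝ] V) - (Bf (α (σ i))).smulRight (α (σ i)))).prod)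
    -- d is the order of c
    (d : ℕ) (hd : 0 < d) (hcord : orderOf c = d) :
    -- Λ = (1 − c)Λ⁰
    ((AddSubgroup.closure Φ : Set V) =
      (fun γ : V => γ - c γ) ''
        {γ : V | ∀ a ∈ AddSubgroup.closure Φ, ∃ n : ℤ, Bf γ a = n}) ∧
    -- hence the pairing ⟨·,·⟩_c on Λ_c is trivial
    (∀ a ∈ AddSubgroup.closure Φ, ∀ b ∈ AddSubgroup.closure Φ,
      ∃ n : ℤ, ∑ j ∈ Finset.Ico 1 d, (j : ℝ) * Bf ((c ^ j) a) b = ((d : ℤ) * n : ℤ)) :=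
  coxeter_element_coinvariant_pairing_trivial_general V Bf hsymm hpos Φ hint hspan ℓ α hα hind hbase
    σ c hc d hcord
end

section
/- Let K be a field of characteristic zero and c₂, c₈, c₁₂, c₁₄, c₁₈, c₂₀, c₂₄, c₃₀ ∈ K. Then there is no rational function a ∈ K(X) satisfying X⁵ + a³ + a·(c₂X³ + c₈X² + c₁₄X + c₂₀) + c₁₂X³ + c₁₈X² + c₂₄X + c₃₀ = 0 in K(X). -/
/-!
The equation says that `a` is a root of the monic cubic `T³ + p T + (X⁵ + q)` over `K[X]`, with
`p`, `q` of degree at most 3. Since `K[X]` is integrally closed, `a` is a polynomial `b`. Then the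
equation is impossible by degrees: if `deg b ≥ 2`, then `b³` has degree `3 deg b ≠ 5` and dominates
`b p + q`, while if `deg b ≤ 1`, then `b³ + b p + q` has degree at most 4.
-/

open Polynomial

theorem isIntegral_of_cube_add_mul_add_eq_zero {A B : Type*} [CommRing A] [Ring B] [Algebra A B]
    {a : B} (p q : A) (h : a ^ 3 + algebraMap A B p * a + algebraMap A B q = 0) :
    IsIntegral A a := by
  refine ⟨X ^ 3 + (C p * X + C q), monic_X_pow_add ?_, ?_⟩
  · compute_degree!
  · simpa [add_assoc] using h

theorem natDegree_cube_add_mul_add_ne_five {K : Type*} [Field K] {b p q : K[X]}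
    (hp : p.natDegree ≤ 3) (hq : q.natDegree ≤ 4) :
    (b ^ 3 + b * p + q).natDegree ≠ 5 := by
  rcases le_or_gt b.natDegree 1 with hb | hb
  · have : (b ^ 3 + b * p + q).natDegree ≤ 4 := by
      refine natDegree_add_le_of_degree_le (natDegree_add_le_of_degree_le ?_ ?_) hq
      · exact natDegree_pow_le.trans (by omega)
      · exact natDegree_mul_le.trans (by omega)
    omega
  · have hcube : (b ^ 3).natDegree = 3 * b.natDegree := natDegree_pow _ _
    rw [add_assoc, natDegree_add_eq_left_of_natDegree_lt, hcube]
    · omega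
    · rw [hcube]
      refine (natDegree_add_le _ _).trans_lt (max_lt ?_ (by omega))
      exact natDegree_mul_le.trans_lt (by omega)

theorem X_pow_five_add_cube_add_mul_add_ne_zero {K : Type*} [Field K] {p q : K[X]}
    (hp : p.natDegree ≤ 3) (hq : q.natDegree ≤ 4) (b : K[X]) :
    X ^ 5 + b ^ 3 + b * p + q ≠ 0 := by
  intro h
  have : b ^ 3 + b * p + q = -X ^ 5 := by linear_combination h
  exact natDegree_cube_add_mul_add_ne_five hp hq (by rw [this, natDegree_neg, natDegree_X_pow])

theorem exists_algebraMap_eq_of_cube_add_mul_add_eq_zero {A L : Type*} [CommRing A]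
    [CommRing L] [Algebra A L] [IsFractionRing A L] [IsIntegrallyClosed A]
    (a : L) (p q : A) (h : a ^ 3 + algebraMap A L p * a + algebraMap A L q = 0) :
    ∃ b : A, algebraMap A L b = a :=
  IsIntegrallyClosed.isIntegral_iff.mp (isIntegral_of_cube_add_mul_add_eq_zero p q h)

theorem no_rational_solution_E8_fixed_points_general
    (K : Type*) [Field K]
    (c₂ c₈ c₁₂ c₁₄ c₁₈ c₂₀ c₂₄ c₃₀ : K) :
    ¬ ∃ a : RatFunc K,
      RatFunc.X ^ 5 + a ^ 3 +
        a * (RatFunc.C c₂ * RatFunc.X ^ 3 + RatFunc.C c₈ * RatFunc.X ^ 2 +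
              RatFunc.C c₁₄ * RatFunc.X + RatFunc.C c₂₀) +
        (RatFunc.C c₁₂ * RatFunc.X ^ 3 + RatFunc.C c₁₈ * RatFunc.X ^ 2 +
          RatFunc.C c₂₄ * RatFunc.X + RatFunc.C c₃₀) = 0 := by
  rintro ⟨a, ha⟩
  set p : K[X] := C c₂ * X ^ 3 + C c₈ * X ^ 2 + C c₁₄ * X + C c₂₀
  set q : K[X] := C c₁₂ * X ^ 3 + C c₁₈ * X ^ 2 + C c₂₄ * X + C c₃₀
  have hp : p.natDegree ≤ 3 := by unfold p; compute_degree
  have hq : q.natDegree ≤ 4 := by unfold q; compute_degree!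
  obtain ⟨b, rfl⟩ := exists_algebraMap_eq_of_cube_add_mul_add_eq_zero a p (X ^ 5 + q) (by
    simp only [p, q, map_add, map_mul, map_pow, RatFunc.algebraMap_C, RatFunc.algebraMap_X]
    linear_combination ha)
  refine X_pow_five_add_cube_add_mul_add_ne_zero hp hq b
    (IsFractionRing.injective K[X] (RatFunc K) ?_)
  simp only [p, q, map_add, map_mul, map_pow, map_zero, RatFunc.algebraMap_C, RatFunc.algebraMap_X]
  linear_combination ha

/-- **Case 1 of Lemma 6.1.** For any field `K` of characteristic zero and any choice of
coefficients, there is no rational function `a ∈ K(X)` with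
`X⁵ + a³ + a(c₂X³ + c₈X² + c₁₄X + c₂₀) + c₁₂X³ + c₁₈X² + c₂₄X + c₃₀ = 0`. -/
theorem no_rational_solution_E8_fixed_points
    (K : Type*) [Field K] [CharZero K]
    (c₂ c₈ c₁₂ c₁₄ c₁₈ c₂₀ c₂₄ c₃₀ : K) :
    ¬ ∃ a : RatFunc K,
      RatFunc.X ^ 5 + a ^ 3 +
        a * (RatFunc.C c₂ * RatFunc.X ^ 3 + RatFunc.C c₈ * RatFunc.X ^ 2 +
              RatFunc.C c₁₄ * RatFunc.X + RatFunc.C c₂₀) +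
        (RatFunc.C c₁₂ * RatFunc.X ^ 3 + RatFunc.C c₁₈ * RatFunc.X ^ 2 +
          RatFunc.C c₂₄ * RatFunc.X + RatFunc.C c₃₀) = 0 :=
  no_rational_solution_E8_fixed_points_general K c₂ c₈ c₁₂ c₁₄ c₁₈ c₂₀ c₂₄ c₃₀
end

section
/- For each λ ∈ Λ_w, the k-linear map ι(λ) : 𝔥 → 𝔥 that fixes 𝔱 pointwise and sends X_{α̃} ↦ ⟨λ, α⟩ X_{α̃} for every α̃ ∈ Φ̃ is a well-defined Lie algebra automorphism of 𝔥 (induced, via functoriality, by conjugation by any lift of λ in ℋ); the resulting map ι : Λ_w → Aut(𝔥) is a group homomorphism; each ι(λ) commutes with w̃ and hence restricts to an automorphism of 𝔤 = 𝔥^{w̃}; and ι is injective whenever the pairing ⟨·,·⟩ on Λ_w is nondegenerate. -/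
noncomputable section

/-- The defining property of the automorphism `ι(λ)` of `𝔥`: it fixes `𝔱` pointwise and
sends `X_α̃ ↦ ⟨λ, α⟩ X_α̃`. -/
def IsIotaMap {k Λ Lt H : Type*} [Field k] [AddCommGroup Λ] [Group Lt]
    [AddCommGroup H] [Module k H]
    (B : Λ →+ Λ →+ ℤ) (pr : Lt → Λ) (tEmb : (Λ →+ k) →ₗ[k] H) (X : Lt → H)
    (pairk : Λ → Λ → k) (lam : Λ) (e : H ≃ₗ[k] H) : Prop :=
  (∀ f : Λ →+ k, e (tEmb f) = tEmb f) ∧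
  (∀ a : Lt, B (pr a) (pr a) = 2 → e (X a) = pairk lam (pr a) • X a)


/-- Powers of a central element commute with everything. -/
lemma zc_comm {G : Type*} [Group G] {z : G} (hzc : z ∈ Subgroup.center G)
    (m : ℤ) (g : G) : g * z ^ m = z ^ m * g :=
  (Subgroup.mem_center_iff.mp (Subgroup.zpow_mem _ hzc m) g)

lemma comm_mul_left {G : Type*} [Group G] {z a b c : G} {i j : ℤ}
    (hzc : z ∈ Subgroup.center G)
    (h1 : a * c * a⁻¹ * c⁻¹ = z ^ i) (h2 : b * c * b⁻¹ * c⁻¹ = z ^ j) :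
    (a * b) * c * (a * b)⁻¹ * c⁻¹ = z ^ (i + j) := by
  have hac : a * c = z ^ i * (c * a) := by rw [← h1]; group
  have hbc : b * c = z ^ j * (c * b) := by rw [← h2]; group
  have h3 : (a * b) * c = z ^ (i + j) * (c * (a * b)) := by
    calc (a * b) * c = a * (b * c) := by rw [mul_assoc]
      _ = a * (z ^ j * (c * b)) := by rw [hbc]
      _ = z ^ j * (a * c * b) := by
          rw [← mul_assoc, ← mul_assoc, zc_comm hzc j a]; group
      _ = z ^ j * (z ^ i * (c * a) * b) := by rw [hac]
      _ = z ^ (i + j) * (c * (a * b)) := by rw [zpow_add]; group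
  rw [h3]; group

lemma comm_mul_right {G : Type*} [Group G] {z a b c : G} {i j : ℤ}
    (hzc : z ∈ Subgroup.center G)
    (h1 : a * b * a⁻¹ * b⁻¹ = z ^ i) (h2 : a * c * a⁻¹ * c⁻¹ = z ^ j) :
    a * (b * c) * a⁻¹ * (b * c)⁻¹ = z ^ (i + j) := by
  have hab : a * b = z ^ i * (b * a) := by rw [← h1]; group
  have hac : a * c = z ^ j * (c * a) := by rw [← h2]; group
  have h3 : a * (b * c) = z ^ (i + j) * ((b * c) * a) := by
    calc a * (b * c) = (a * b) * c := by rw [mul_assoc]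
      _ = z ^ i * (b * (a * c)) := by rw [hab]; group
      _ = z ^ i * (b * (z ^ j * (c * a))) := by rw [hac]
      _ = z ^ i * (z ^ j * (b * (c * a))) := by
          rw [← mul_assoc b, zc_comm hzc j b]; group
      _ = z ^ (i + j) * ((b * c) * a) := by rw [zpow_add]; group
  rw [h3]; group

lemma zpow_reduce {G : Type*} [Group G] {g : G} {d : ℕ} (hd : 0 < d)
    (hg : g ^ d = 1) (i : ℤ) : g ^ i = g ^ (i % (d : ℤ)).toNat := by
  have h0 : (0 : ℤ) ≤ i % (d : ℤ) :=
    Int.emod_nonneg i (by exact_mod_cast hd.ne')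
  conv_lhs => rw [← Int.mul_ediv_add_emod i (d : ℤ)]
  rw [zpow_add, zpow_mul, zpow_natCast, hg, one_zpow, one_mul,
    ← zpow_natCast, Int.toNat_of_nonneg h0]

lemma corootSpan (k : Type*) [Field k] [CharZero k]
    (Λ : Type*) [AddCommGroup Λ] [Module.Free ℤ Λ] [Module.Finite ℤ Λ]
    (B : Λ →+ Λ →+ ℤ)
    (hBpos : ∀ a : Λ, a ≠ 0 → 0 < B a a)
    (hBgen : AddSubgroup.closure {a : Λ | B a a = 2} = ⊤) :
    Submodule.span k {f : Λ →+ k | ∃ α : Λ, B α α = 2 ∧ f = corootHom k B α} = ⊤ := by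
  classical
  set Scor : Set (Λ →+ k) := {f : Λ →+ k | ∃ α : Λ, B α α = 2 ∧ f = corootHom k B α}
    with hScor
  set ι := Module.Free.ChooseBasisIndex ℤ Λ
  set b : Module.Basis ι ℤ Λ := Module.Free.chooseBasis ℤ Λ with hb
  have hcradd : ∀ α β : Λ, corootHom k B (α + β) = corootHom k B α + corootHom k B β := by
    intro α β; ext x; simp [corootHom]
  set C : Λ →+ (Λ →+ k) := AddMonoidHom.mk' (fun α => corootHom k B α) hcradd with hC
  have hmem : ∀ α : Λ, corootHom k B α ∈ Submodule.span k Scor := by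
    intro α
    have hle : AddSubgroup.closure {a : Λ | B a a = 2} ≤
        (Submodule.span k Scor).toAddSubgroup.comap C := by
      rw [AddSubgroup.closure_le]
      intro a ha
      exact Submodule.subset_span ⟨a, ha, rfl⟩
    rw [hBgen] at hle
    exact hle (Set.mem_univ α)
  set M : Matrix ι ι ℤ := Matrix.of (fun i j => B (b i) (b j)) with hM
  have hMdet : M.det ≠ 0 := by
    intro h0
    set Mq : Matrix ι ι ℚ := M.map (Int.cast : ℤ → ℚ) with hMq
    have hq : Mq.det = 0 := by
      have := RingHom.map_det (Int.castRingHom ℚ) M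
      rw [h0] at this
      simpa [Mq, RingHom.mapMatrix_apply] using this.symm
    obtain ⟨v, hv0, hMv⟩ := Matrix.exists_mulVec_eq_zero_iff.mpr hq
    set N : ℤ := ∏ i, ((v i).den : ℤ) with hN
    have hNne : (N : ℚ) ≠ 0 := by
      rw [hN]; push_cast
      exact Finset.prod_ne_zero_iff.mpr fun i _ => Nat.cast_ne_zero.mpr (v i).den_nz
    have hu0 : ∀ i : ι, ∃ m : ℤ, (m : ℚ) = (N : ℚ) * v i := by
      intro i
      have hdvd : ((v i).den : ℤ) ∣ N := Finset.dvd_prod_of_mem _ (Finset.mem_univ i)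
      obtain ⟨m, hm⟩ := hdvd
      refine ⟨m * (v i).num, ?_⟩
      rw [hm]; push_cast
      rw [← Rat.mul_den_eq_num (v i)]; ring
    choose u hu using hu0
    have hz : ∀ i, ∑ j, (u j : ℚ) * ((B (b i) (b j) : ℤ) : ℚ) = 0 := by
      intro i
      have h := congrFun hMv i
      have h2 : Mq.mulVec v i = ∑ j, ((B (b i) (b j) : ℤ) : ℚ) * v j := by
        simp [Matrix.mulVec, dotProduct, Mq, M]
      calc ∑ j, (u j : ℚ) * ((B (b i) (b j) : ℤ) : ℚ)
          = ∑ j, (N : ℚ) * (((B (b i) (b j) : ℤ) : ℚ) * v j) := by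
            refine Finset.sum_congr rfl fun j _ => ?_
            rw [hu j]; ring
        _ = (N : ℚ) * Mq.mulVec v i := by rw [← Finset.mul_sum, h2]
        _ = 0 := by rw [h]; simp
    set α : Λ := ∑ i, u i • b i with hα
    have hB1 : B α α = ∑ i, u i * (∑ j, u j * B (b i) (b j)) := by
      rw [hα]
      simp only [map_sum, AddMonoidHom.finset_sum_apply, map_zsmul,
        AddMonoidHom.smul_apply, smul_eq_mul, Finset.mul_sum]
      rw [Finset.sum_comm]
      exact Finset.sum_congr rfl fun i _ => Finset.sum_congr rfl fun j _ => by ring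
    have hBq : ((B α α : ℤ) : ℚ) = 0 := by
      rw [hB1]; push_cast
      rw [Finset.sum_eq_zero]
      intro i _
      rw [hz i, mul_zero]
    have hBZ : B α α = 0 := by exact_mod_cast hBq
    have hαne : α ≠ 0 := by
      obtain ⟨i0, hi0⟩ := Function.ne_iff.mp hv0
      have hui0 : u i0 ≠ 0 := by
        intro h
        have := hu i0
        rw [h] at this
        exact (mul_ne_zero hNne hi0) (by exact_mod_cast this.symm)
      intro h0
      exact hui0 (Fintype.linearIndependent_iff.mp b.linearIndependent u (hα ▸ h0) i0)
    have := hBpos α hαne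
    omega
  set Mk : Matrix ι ι k := M.map (Int.cast : ℤ → k) with hMk
  have hMkdet : IsUnit Mk.det := by
    have h2 : Mk.det = ((M.det : ℤ) : k) := by
      have h3 := (RingHom.map_det (Int.castRingHom k) M).symm
      simpa [RingHom.mapMatrix_apply, Mk] using h3
    rw [h2]
    exact (Int.cast_ne_zero.mpr hMdet).isUnit
  set E : (Λ →+ k) ≃ₗ[k] (ι → k) :=
    (addMonoidHomLequivInt k).trans (b.constr k).symm with hE
  have hEapp : ∀ (f : Λ →+ k) (i : ι), E f i = f (b i) := by
    intro f i
    have h1 : (b.constr k) (E f) = f.toIntLinearMap := by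
      rw [hE]; simp
    calc E f i = ((b.constr k) (E f)) (b i) := (b.constr_basis k (E f) i).symm
      _ = f (b i) := by rw [h1]; rfl
  have hEcor : ∀ α : Λ, E (corootHom k B α) = fun i => ((B α (b i) : ℤ) : k) := by
    intro α; funext i; rw [hEapp]; simp [corootHom]
  rw [eq_top_iff]
  rintro f -
  set c : ι → k := Matrix.vecMul (E f) Mk⁻¹ with hc
  have hre : E f = ∑ j, c j • Mk j := by
    have h1 : E f = Matrix.vecMul c Mk := by
      rw [hc, Matrix.vecMul_vecMul, Matrix.nonsing_inv_mul Mk hMkdet, Matrix.vecMul_one]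
    rw [h1]
    funext i
    simp [Matrix.vecMul, dotProduct, Finset.sum_apply]
  have hrow : ∀ j : ι, Mk j = E (corootHom k B (b j)) := by
    intro j
    rw [hEcor (b j)]
    funext i
    simp [Mk, M]
  have hf : f = ∑ j, c j • corootHom k B (b j) := by
    apply E.injective
    rw [map_sum, hre]
    refine Finset.sum_congr rfl fun j _ => ?_
    rw [map_smul, hrow]
  rw [hf]
  exact Submodule.sum_mem _ fun j _ => Submodule.smul_mem _ _ (hmem (b j))

/-- **Remark 2.6.** For each `λ ∈ Λ_w`, the map `ι(λ)` fixing `𝔱` and scaling `X_α̃` by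
`⟨λ,α⟩` is a well-defined Lie algebra automorphism of `𝔥`; `ι : Λ_w → Aut(𝔥)` is a group
homomorphism; each `ι(λ)` commutes with `w̃` and so restricts to `𝔤`; and `ι` is injective
whenever `⟨·,·⟩` is nondegenerate. -/
theorem inner_automorphisms_of_coinvariants
    (k : Type*) [Field k] [CharZero k]
    (d : ℕ) (hd : 0 < d) (ζ : k) (hζ : IsPrimitiveRoot ζ d)
    -- the simply laced root lattice Λ with elliptic automorphism w of order d
    (Λ : Type*) [AddCommGroup Λ] [Module.Free ℤ Λ] [Module.Finite ℤ Λ]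
    (B : Λ →+ Λ →+ ℤ)
    (hBsymm : ∀ a b : Λ, B a b = B b a)
    (hBpos : ∀ a : Λ, a ≠ 0 → 0 < B a a)
    (hBgen : AddSubgroup.closure {a : Λ | B a a = 2} = ⊤)
    (w : AddAut Λ) (hwB : ∀ a b : Λ, B (w a) (w b) = B a b)
    (hword : addOrderOf w = d)
    (hell : Finite (Λ ⧸ coinvSub w))
    -- the central extension Λ̃ of Λ by ⟨ζ⟩ (pulled back from ℋ over the coinvariants)
    (Lt : Type*) [Group Lt]
    (z : Lt) (hzc : z ∈ Subgroup.center Lt) (hzord : orderOf z = d)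
    (pr : Lt → Λ) (hpr : ∀ a b : Lt, pr (a * b) = pr a + pr b)
    (hprs : Function.Surjective pr)
    (hker : ∀ a : Lt, pr a = 0 ↔ ∃ i : ℤ, a = z ^ i)
    (hfac : ∀ a b c : Lt, pr a - pr b ∈ coinvSub w →
      a * c * a⁻¹ * c⁻¹ = b * c * b⁻¹ * c⁻¹)
    -- the biadditive pairing ε, making (Λ, w, ℋ, ε) an input datum
    (ε : Λ → Λ → kˣ)
    (hεadd₁ : ∀ a b c : Λ, ε (a + b) c = ε a c * ε b c)
    (hεadd₂ : ∀ a b c : Λ, ε a (b + c) = ε a b * ε a c)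
    (hεcomm : ∀ a b : Lt, B (pr a) (pr a) = 2 → B (pr b) (pr b) = 2 →
      B (pr a) (pr b) = -1 → ∀ i : ℤ, b * a * b⁻¹ * a⁻¹ = z ^ i →
      ((ε (pr a) (pr b) : k) / ((ε (pr b) (pr a) : k))) = -(ζ ^ i))
    (hεw : ∀ a b : Λ, ε (w a) (w b) = ε a b)
    -- the underlying vector space 𝔥 = 𝔱 ⊕ 𝔩
    (H : Type*) [AddCommGroup H] [Module k H]
    (tEmb : (Λ →+ k) →ₗ[k] H) (htinj : Function.Injective tEmb)
    (X : Lt → H)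
    (hXζ : ∀ a : Lt, B (pr a) (pr a) = 2 → X (z * a) = ζ • X a)
    (sec : Λ → Lt) (hsec : ∀ α : Λ, pr (sec α) = α)
    (hXind : LinearIndependent k (fun α : {α : Λ // B α α = 2} => X (sec α)))
    (hspan : Submodule.span k
      (Set.range ⇑tEmb ∪ X '' {a : Lt | B (pr a) (pr a) = 2}) = ⊤)
    (hdisj : Disjoint (LinearMap.range tEmb)
      (Submodule.span k (X '' {a : Lt | B (pr a) (pr a) = 2})))
    -- the bracket of the construction
    (br : H →ₗ[k] H →ₗ[k] H)
    (hbr_tt : ∀ f g : Λ →+ k, br (tEmb f) (tEmb g) = 0)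
    (hbr_tX : ∀ (α : Λ) (a : Lt), B α α = 2 → B (pr a) (pr a) = 2 →
      br (tEmb (corootHom k B α)) (X a) = ((B α (pr a) : k)) • X a)
    (hbr_Xt : ∀ (α : Λ) (a : Lt), B α α = 2 → B (pr a) (pr a) = 2 →
      br (X a) (tEmb (corootHom k B α)) = (-(B α (pr a) : k)) • X a)
    (hbr_XX₀ : ∀ a b : Lt, B (pr a) (pr a) = 2 → B (pr b) (pr b) = 2 →
      pr a + pr b = 0 → ∀ i : ℤ, a * b = z ^ i →
      br (X a) (X b) = (((ε (pr a) (pr b) : k)) * ζ ^ i) • tEmb (corootHom k B (pr a)))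
    (hbr_XXΦ : ∀ a b : Lt, B (pr a) (pr a) = 2 → B (pr b) (pr b) = 2 →
      B (pr a + pr b) (pr a + pr b) = 2 →
      br (X a) (X b) = ((ε (pr a) (pr b) : k)) • X (a * b))
    (hbr_XXo : ∀ a b : Lt, B (pr a) (pr a) = 2 → B (pr b) (pr b) = 2 →
      pr a + pr b ≠ 0 → B (pr a + pr b) (pr a + pr b) ≠ 2 →
      br (X a) (X b) = 0)
    -- the lift of w to Λ̃ (acting as w on Λ and trivially on ℋ)
    (wt : MulAut Lt) (hwtpr : ∀ a : Lt, pr (wt a) = w (pr a))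
    (hwtz : wt z = z) (hwtd : wt ^ d = 1)
    -- the lift w̃ of w to 𝔥
    (wH : H →ₗ[k] H)
    (hwHt : ∀ α : Λ, B α α = 2 →
      wH (tEmb (corootHom k B α)) = tEmb (corootHom k B (w α)))
    (hwHX : ∀ a : Lt, B (pr a) (pr a) = 2 → wH (X a) = X (wt a))
    -- the commutator pairing of ℋ, valued in ⟨ζ⟩ ⊆ k^×, pulled back to Λ
    (pairk : Λ → Λ → k)
    (hpairk : ∀ (a b : Lt) (i : ℤ), a * b * a⁻¹ * b⁻¹ = z ^ i →
      pairk (pr a) (pr b) = ζ ^ i)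
    (hpairfac₁ : ∀ lam lam' μ : Λ, lam - lam' ∈ coinvSub w → pairk lam μ = pairk lam' μ)
    (hpairfac₂ : ∀ lam μ μ' : Λ, μ - μ' ∈ coinvSub w → pairk lam μ = pairk lam μ') :
    -- ι(λ) is a well-defined Lie algebra automorphism
    (∀ lam : Λ, ∃ e : H ≃ₗ[k] H, IsIotaMap B pr tEmb X pairk lam e ∧
      ∀ x y : H, e (br x y) = br (e x) (e y)) ∧
    -- ι(λ) depends only on the class of λ in Λ_w
    (∀ (lam lam' : Λ) (e : H ≃ₗ[k] H), lam - lam' ∈ coinvSub w →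
      IsIotaMap B pr tEmb X pairk lam e → IsIotaMap B pr tEmb X pairk lam' e) ∧
    -- ι is a group homomorphism
    (∀ (lam μ : Λ) (e₁ e₂ e₃ : H ≃ₗ[k] H),
      IsIotaMap B pr tEmb X pairk lam e₁ → IsIotaMap B pr tEmb X pairk μ e₂ →
      IsIotaMap B pr tEmb X pairk (lam + μ) e₃ → ∀ x : H, e₃ x = e₁ (e₂ x)) ∧
    -- ι(λ) commutes with w̃, hence restricts to an automorphism of 𝔤 = 𝔥^{w̃}
    (∀ (lam : Λ) (e : H ≃ₗ[k] H), IsIotaMap B pr tEmb X pairk lam e →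
      (∀ x : H, e (wH x) = wH (e x)) ∧ (∀ x : H, wH x = x → wH (e x) = e x)) ∧
    -- ι is injective whenever the pairing on Λ_w is nondegenerate
    ((∀ μ : Λ, (∀ ν : Λ, pairk μ ν = 1) → μ ∈ coinvSub w) →
      ∀ (lam : Λ) (e : H ≃ₗ[k] H), IsIotaMap B pr tEmb X pairk lam e →
        (∀ x : H, e x = x) → lam ∈ coinvSub w) := by
    classical
  -- basic facts about pr
  have hpr1 : pr 1 = 0 := by
    have h := hpr 1 1
    rw [one_mul] at h
    exact (left_eq_add.mp h)
  have hprinv : ∀ a : Lt, pr a⁻¹ = - pr a := by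
    intro a
    have h := hpr a a⁻¹
    rw [mul_inv_cancel, hpr1] at h
    exact eq_neg_of_add_eq_zero_right h.symm
  have hζne : ζ ≠ 0 := hζ.ne_zero hd.ne'
  have hζd : ζ ^ d = 1 := hζ.pow_eq_one
  have hzd : z ^ d = 1 := by rw [← hzord]; exact pow_orderOf_eq_one z
  have hzred : ∀ i : ℤ, z ^ i = z ^ ((i % (d : ℤ)).toNat) := fun i => zpow_reduce hd hzd i
  have hζred : ∀ i : ℤ, ζ ^ i = ζ ^ ((i % (d : ℤ)).toNat) := by
    intro i
    have hu : (Units.mk0 ζ hζne) ^ d = 1 := by ext; simp [hζd]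
    have h2 := congrArg (Units.val) (zpow_reduce hd hu i)
    simpa [Units.val_zpow_eq_zpow_val] using h2
  -- scaling of X by powers of z
  have hXn : ∀ (n : ℕ) (a : Lt), B (pr a) (pr a) = 2 → X (z ^ n * a) = ζ ^ n • X a := by
    intro n
    induction n with
    | zero => intro a ha; simp
    | succ n ih =>
      intro a ha
      have hpz : pr (z ^ n * a) = pr a := by
        rw [hpr]
        have h0 : pr (z ^ n) = 0 := (hker _).mpr ⟨n, (zpow_natCast z n).symm⟩
        rw [h0, zero_add]
      have h1 : X (z ^ (n + 1) * a) = ζ • X (z ^ n * a) := by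
        rw [pow_succ', mul_assoc]
        exact hXζ (z ^ n * a) (by rw [hpz]; exact ha)
      rw [h1, ih a ha, smul_smul, pow_succ']
  -- commutators are powers of z
  have hcomm_ex : ∀ a b : Lt, ∃ i : ℤ, a * b * a⁻¹ * b⁻¹ = z ^ i := by
    intro a b
    refine (hker _).mp ?_
    rw [hpr, hpr, hpr, hprinv, hprinv]
    abel
  -- pairk facts
  have hpk : ∀ lam μ : Λ, ∃ i : ℤ,
      sec lam * sec μ * (sec lam)⁻¹ * (sec μ)⁻¹ = z ^ i ∧ pairk lam μ = ζ ^ i := by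
    intro lam μ
    obtain ⟨i, hi⟩ := hcomm_ex (sec lam) (sec μ)
    refine ⟨i, hi, ?_⟩
    have h := hpairk (sec lam) (sec μ) i hi
    rwa [hsec, hsec] at h
  have hpkne : ∀ lam μ : Λ, pairk lam μ ≠ 0 := by
    intro lam μ
    obtain ⟨i, _, h⟩ := hpk lam μ
    rw [h]
    exact zpow_ne_zero i hζne
  have hpkadd₂ : ∀ lam μ ν : Λ, pairk lam (μ + ν) = pairk lam μ * pairk lam ν := by
    intro lam μ ν
    obtain ⟨i, hi, hpi⟩ := hpk lam μ
    obtain ⟨j, hj, hpj⟩ := hpk lam ν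
    have hc := comm_mul_right hzc hi hj
    have hp := hpairk (sec lam) (sec μ * sec ν) (i + j) hc
    rw [hsec, hpr, hsec, hsec] at hp
    rw [hp, hpi, hpj, zpow_add₀ hζne]
  have hpkadd₁ : ∀ lam μ ν : Λ, pairk (lam + μ) ν = pairk lam ν * pairk μ ν := by
    intro lam μ ν
    obtain ⟨i, hi, hpi⟩ := hpk lam ν
    obtain ⟨j, hj, hpj⟩ := hpk μ ν
    have hc := comm_mul_left hzc hi hj
    have hp := hpairk (sec lam * sec μ) (sec ν) (i + j) hc
    rw [hpr, hsec, hsec, hsec] at hp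
    rw [hp, hpi, hpj, zpow_add₀ hζne]
  have hpk0 : ∀ lam : Λ, pairk lam 0 = 1 := by
    intro lam
    have h := hpkadd₂ lam 0 0
    rw [add_zero] at h
    have h2 : pairk lam 0 * 1 = pairk lam 0 * pairk lam 0 := by rw [mul_one, ← h]
    exact (mul_left_cancel₀ (hpkne lam 0) h2).symm
  have hpkw : ∀ lam μ : Λ, pairk lam (w μ) = pairk lam μ := by
    intro lam μ
    refine hpairfac₂ lam (w μ) μ ?_
    have h1 : μ - w μ ∈ coinvSub w := AddSubgroup.subset_closure ⟨μ, rfl⟩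
    have h2 := AddSubgroup.neg_mem _ h1
    rwa [neg_sub] at h2
  -- spanning sets
  set Scor : Set (Λ →+ k) := {f : Λ →+ k | ∃ α : Λ, B α α = 2 ∧ f = corootHom k B α}
    with hScordef
  set SH : Set H := (⇑tEmb '' Scor) ∪ (X '' {a : Lt | B (pr a) (pr a) = 2}) with hSHdef
  set T : Submodule k H := LinearMap.range tEmb with hTdef
  set L : Submodule k H := Submodule.span k (X '' {a : Lt | B (pr a) (pr a) = 2}) with hLdef
  have hTspan : Submodule.span k (⇑tEmb '' Scor) = T := by
    rw [← Submodule.map_span, corootSpan k Λ B hBpos hBgen, Submodule.map_top]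
  have hTL : T ⊔ L = ⊤ := by
    have h1 : Submodule.span k (Set.range ⇑tEmb) = T := by
      rw [← LinearMap.coe_range, Submodule.span_eq]
    calc T ⊔ L = Submodule.span k (Set.range ⇑tEmb ∪ X '' {a : Lt | B (pr a) (pr a) = 2}) := by
          rw [Submodule.span_union, h1]
      _ = ⊤ := hspan
  have hcompl : IsCompl T L := ⟨hdisj, codisjoint_iff.mpr hTL⟩
  have hSHspan : Submodule.span k SH = ⊤ := by
    rw [hSHdef, Submodule.span_union, hTspan]
    exact hTL
  have htmem : ∀ f : Λ →+ k, tEmb f ∈ T := fun f => LinearMap.mem_range_self tEmb f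
  have hXmem : ∀ a : Lt, B (pr a) (pr a) = 2 → X a ∈ L :=
    fun a ha => Submodule.subset_span ⟨a, ha, rfl⟩
  -- every X a is a root of unity multiple of X (sec (pr a))
  have hXrel : ∀ (a : Lt), B (pr a) (pr a) = 2 → ∃ n : ℕ, X a = ζ ^ n • X (sec (pr a)) := by
    intro a ha
    have h0 : pr (a * (sec (pr a))⁻¹) = 0 := by
      rw [hpr, hprinv, hsec]
      abel
    obtain ⟨i, hi⟩ := (hker _).mp h0
    have ha2 : a = z ^ i * sec (pr a) := by rw [← hi]; group
    refine ⟨(i % (d : ℤ)).toNat, ?_⟩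
    have h3 := hXn ((i % (d : ℤ)).toNat) (sec (pr a)) (by rw [hsec]; exact ha)
    rw [← hzred i, ← ha2] at h3
    exact h3
  -- a basis of L
  set xb : {α : Λ // B α α = 2} → H := fun α => X (sec ↑α) with hxbdef
  have hxbmem : ∀ α : {α : Λ // B α α = 2}, xb α ∈ L :=
    fun α => hXmem _ (by rw [hsec]; exact α.2)
  have hLspan2 : L = Submodule.span k (Set.range xb) := by
    apply le_antisymm
    · rw [hLdef]
      apply Submodule.span_le.mpr
      rintro x ⟨a, ha, rfl⟩
      obtain ⟨n, hn⟩ := hXrel a ha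
      rw [hn]
      exact Submodule.smul_mem _ _ (Submodule.subset_span ⟨⟨pr a, ha⟩, rfl⟩)
    · apply Submodule.span_le.mpr
      rintro x ⟨α, rfl⟩
      exact hxbmem α
  set famL : {α : Λ // B α α = 2} → L := fun α => ⟨xb α, hxbmem α⟩ with hfamLdef
  have hfamind : LinearIndependent k famL := by
    apply LinearIndependent.of_comp L.subtype
    exact hXind
  have hfamspan : ⊤ ≤ Submodule.span k (Set.range famL) := by
    have hmap : Submodule.map L.subtype (Submodule.span k (Set.range famL))
        = Submodule.map L.subtype ⊤ := by
      rw [Submodule.map_span, Submodule.map_top, Submodule.range_subtype, ← Set.range_comp]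
      have h : (⇑L.subtype ∘ famL) = xb := rfl
      rw [h, ← hLspan2]
    exact (Submodule.map_injective_of_injective L.injective_subtype hmap).ge
  set basL : Module.Basis {α : Λ // B α α = 2} k L := Module.Basis.mk hfamind hfamspan with hbasLdef
  -- generic construction of endomorphisms fixing T and scaling each X a
  have hexists : ∀ cf : {α : Λ // B α α = 2} → k, ∃ E : H →ₗ[k] H,
      (∀ x ∈ T, E x = x) ∧
      (∀ (a : Lt) (ha : B (pr a) (pr a) = 2), E (X a) = cf ⟨pr a, ha⟩ • X a) := by
    intro cf
    set prT : H →ₗ[k] T := T.linearProjOfIsCompl L hcompl with hprTdef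
    set prL : H →ₗ[k] L := L.linearProjOfIsCompl T hcompl.symm with hprLdef
    refine ⟨T.subtype ∘ₗ prT + (basL.constr k fun α => cf α • xb α) ∘ₗ prL, ?_, ?_⟩
    · intro x hx
      have h1 : prT x = ⟨x, hx⟩ := Submodule.linearProjOfIsCompl_apply_left hcompl ⟨x, hx⟩
      have h2 : prL x = 0 := Submodule.linearProjOfIsCompl_apply_right hcompl.symm ⟨x, hx⟩
      simp [LinearMap.add_apply, LinearMap.comp_apply, h1, h2]
    · intro a ha
      have hmem := hXmem a ha
      have h1 : prT (X a) = 0 :=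
        Submodule.linearProjOfIsCompl_apply_right hcompl ⟨X a, hmem⟩
      have h2 : prL (X a) = ⟨X a, hmem⟩ :=
        Submodule.linearProjOfIsCompl_apply_left hcompl.symm ⟨X a, hmem⟩
      obtain ⟨n, hn⟩ := hXrel a ha
      have h3 : (⟨X a, hmem⟩ : L) = (ζ ^ n : k) • basL ⟨pr a, ha⟩ := by
        rw [hbasLdef, Module.Basis.mk_apply]
        apply Subtype.ext
        simp [hfamLdef, hxbdef, hn]
      have h4 : (basL.constr k fun α => cf α • xb α) (⟨X a, hmem⟩ : L)
          = (ζ ^ n : k) • (cf ⟨pr a, ha⟩ • xb ⟨pr a, ha⟩) := by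
        rw [h3, map_smul, Module.Basis.constr_basis]
      simp only [LinearMap.add_apply, LinearMap.comp_apply, h1, h2, map_zero, zero_add, h4]
      rw [hxbdef]
      simp only []
      rw [hn, smul_comm]
  -- extension principle
  have hext : ∀ (f g : H →ₗ[k] H),
      (∀ α : Λ, B α α = 2 → f (tEmb (corootHom k B α)) = g (tEmb (corootHom k B α))) →
      (∀ a : Lt, B (pr a) (pr a) = 2 → f (X a) = g (X a)) → f = g := by
    intro f g h1 h2
    apply LinearMap.ext_on hSHspan
    rintro x (⟨fΛ, ⟨α, hα, rfl⟩, rfl⟩ | ⟨a, ha, rfl⟩)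
    exacts [h1 α hα, h2 a ha]
  refine ⟨?_, ?_, ?_, ?_, ?_⟩
  · -- conjunct 1 : existence of the automorphism
    intro lam
    obtain ⟨e₀, he₀T, he₀X'⟩ := hexists (fun α => pairk lam ↑α)
    obtain ⟨e₁, he₁T, he₁X'⟩ := hexists (fun α => (pairk lam ↑α)⁻¹)
    have he₀X : ∀ (a : Lt), B (pr a) (pr a) = 2 → e₀ (X a) = pairk lam (pr a) • X a :=
      fun a ha => he₀X' a ha
    have he₁X : ∀ (a : Lt), B (pr a) (pr a) = 2 → e₁ (X a) = (pairk lam (pr a))⁻¹ • X a :=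
      fun a ha => he₁X' a ha
    have hco1 : e₀ ∘ₗ e₁ = LinearMap.id := by
      apply hext
      · intro α hα
        rw [LinearMap.comp_apply, he₁T _ (htmem _), he₀T _ (htmem _), LinearMap.id_apply]
      · intro a ha
        rw [LinearMap.comp_apply, he₁X a ha, map_smul, he₀X a ha, LinearMap.id_apply,
          smul_smul, inv_mul_cancel₀ (hpkne lam (pr a)), one_smul]
    have hco2 : e₁ ∘ₗ e₀ = LinearMap.id := by
      apply hext
      · intro α hα
        rw [LinearMap.comp_apply, he₀T _ (htmem _), he₁T _ (htmem _), LinearMap.id_apply]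
      · intro a ha
        rw [LinearMap.comp_apply, he₀X a ha, map_smul, he₁X a ha, LinearMap.id_apply,
          smul_smul, mul_inv_cancel₀ (hpkne lam (pr a)), one_smul]
    refine ⟨LinearEquiv.ofLinear e₀ e₁ hco1 hco2, ⟨?_, ?_⟩, ?_⟩
    · intro f
      rw [LinearEquiv.ofLinear_apply]
      exact he₀T _ (htmem f)
    · intro a ha
      rw [LinearEquiv.ofLinear_apply]
      exact he₀X a ha
    · -- the bracket is preserved
      have key : ∀ x ∈ SH, ∀ y ∈ SH, e₀ (br x y) = br (e₀ x) (e₀ y) := by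
        rintro x (⟨fΛ, ⟨α, hα, rfl⟩, rfl⟩ | ⟨a, ha, rfl⟩)
          <;> rintro y (⟨gΛ, ⟨β, hβ, rfl⟩, rfl⟩ | ⟨b, hb, rfl⟩)
        · rw [hbr_tt, map_zero, he₀T _ (htmem _), he₀T _ (htmem _), hbr_tt]
        · rw [hbr_tX α b hα hb, map_smul, he₀X b hb, he₀T _ (htmem _), map_smul,
            hbr_tX α b hα hb, smul_comm]
        · rw [hbr_Xt β a hβ ha, map_smul, he₀X a ha, he₀T _ (htmem _), map_smul,
            LinearMap.smul_apply, hbr_Xt β a hβ ha, smul_comm]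
        · by_cases h0 : pr a + pr b = 0
          · obtain ⟨i, hi⟩ := (hker (a * b)).mp (by rw [hpr]; exact h0)
            have hp1 : pairk lam (pr a) * pairk lam (pr b) = 1 := by
              rw [← hpkadd₂, h0, hpk0]
            rw [hbr_XX₀ a b ha hb h0 i hi, he₀X a ha, he₀X b hb]
            rw [map_smul, he₀T _ (htmem _)]
            simp only [map_smul, LinearMap.smul_apply, smul_smul]
            rw [hbr_XX₀ a b ha hb h0 i hi, smul_smul]
            congr 1
            linear_combination (((ε (pr a) (pr b) : k)) * ζ ^ i) * hp1.symm
          · by_cases h2 : B (pr a + pr b) (pr a + pr b) = 2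
            · have hab : B (pr (a * b)) (pr (a * b)) = 2 := by rw [hpr]; exact h2
              rw [hbr_XXΦ a b ha hb h2, he₀X a ha, he₀X b hb]
              rw [map_smul, he₀X (a * b) hab]
              simp only [map_smul, LinearMap.smul_apply, smul_smul]
              rw [hbr_XXΦ a b ha hb h2, smul_smul]
              congr 1
              rw [hpr, hpkadd₂]
              ring
            · rw [hbr_XXo a b ha hb h0 h2, map_zero, he₀X a ha, he₀X b hb]
              simp only [map_smul, LinearMap.smul_apply, smul_smul]
              rw [hbr_XXo a b ha hb h0 h2, smul_zero]
      have hbil : br.compr₂ e₀ = (br ∘ₗ e₀).compl₂ e₀ := by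
        apply LinearMap.ext_on hSHspan
        intro x hx
        apply LinearMap.ext_on hSHspan
        intro y hy
        simp only [LinearMap.compr₂_apply, LinearMap.compl₂_apply, LinearMap.comp_apply]
        exact key x hx y hy
      intro x y
      have h := LinearMap.congr_fun (LinearMap.congr_fun hbil x) y
      simp only [LinearMap.compr₂_apply, LinearMap.compl₂_apply, LinearMap.comp_apply] at h
      rw [LinearEquiv.ofLinear_apply, LinearEquiv.ofLinear_apply, LinearEquiv.ofLinear_apply]
      exact h
  · -- conjunct 2 : only depends on the class modulo (1-w)Λ
    rintro lam lam' e hmem ⟨h1, h2⟩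
    refine ⟨h1, fun a ha => ?_⟩
    rw [h2 a ha, hpairfac₁ lam lam' (pr a) hmem]
  · -- conjunct 3 : group homomorphism
    rintro lam μ e1 e2 e3 h1 h2 h3 x
    have hlin : e3.toLinearMap = e1.toLinearMap ∘ₗ e2.toLinearMap := by
      apply hext
      · intro α hα
        simp only [LinearEquiv.coe_coe, LinearMap.comp_apply]
        rw [h3.1, h2.1, h1.1]
      · intro a ha
        simp only [LinearEquiv.coe_coe, LinearMap.comp_apply]
        rw [h3.2 a ha, h2.2 a ha, map_smul, h1.2 a ha, smul_smul, hpkadd₁, mul_comm]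
    have h := LinearMap.congr_fun hlin x
    simpa using h
  · -- conjunct 4 : commutes with w̃
    rintro lam e ⟨h1, h2⟩
    have hcomm : ∀ x : H, e (wH x) = wH (e x) := by
      have hlin : (e.toLinearMap ∘ₗ wH) = (wH ∘ₗ e.toLinearMap) := by
        apply hext
        · intro α hα
          simp only [LinearEquiv.coe_coe, LinearMap.comp_apply]
          rw [hwHt α hα, h1, h1, hwHt α hα]
        · intro a ha
          have hwa : B (pr (wt a)) (pr (wt a)) = 2 := by rw [hwtpr, hwB]; exact ha
          simp only [LinearEquiv.coe_coe, LinearMap.comp_apply]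
          rw [hwHX a ha, h2 (wt a) hwa, h2 a ha, map_smul, hwHX a ha, hwtpr, hpkw]
      intro x
      have h := LinearMap.congr_fun hlin x
      simpa using h
    exact ⟨hcomm, fun x hx => by rw [← hcomm, hx]⟩
  · -- conjunct 5 : injectivity
    rintro hnd lam e ⟨h1, h2⟩ hid
    apply hnd lam
    have hroot : ∀ α : Λ, B α α = 2 → pairk lam α = 1 := by
      intro α hα
      have ha : B (pr (sec α)) (pr (sec α)) = 2 := by rw [hsec]; exact hα
      have h3 := h2 (sec α) ha
      rw [hid, hsec] at h3
      have hne : X (sec α) ≠ 0 := by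
        have := hXind.ne_zero ⟨α, hα⟩
        exact this
      have h4 : (pairk lam α - 1) • X (sec α) = 0 := by
        rw [sub_smul, one_smul, ← h3, sub_self]
      rcases smul_eq_zero.mp h4 with h5 | h5
      · exact sub_eq_zero.mp h5
      · exact absurd h5 hne
    intro ν
    have hν : ν ∈ AddSubgroup.closure {a : Λ | B a a = 2} := by
      rw [hBgen]; trivial
    refine AddSubgroup.closure_induction (p := fun x _ => pairk lam x = 1)
      (fun x hx => hroot x hx) (hpk0 lam) ?_ ?_ hν
    · intro x y _ _ hx hy
      rw [hpkadd₂, hx, hy, mul_one]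
    · intro x _ hx
      have h5 := hpkadd₂ lam (-x) x
      rw [neg_add_cancel, hpk0, hx, mul_one] at h5
      exact h5.symm


end
end
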